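/- arXiv:2402.07441 — 16 statements merged into one kernel-verified Lean document; each statement's English description precedes it below -/
import Mathlib

section
/- Let G = (V, E) be a finite simple graph, let w : V → ℝ satisfy w(v) > 0 for every v ∈ V, let W = Σ_{v∈V} w(v), and let z > 0 be a real number. If w(u) + w(v) ≥ W/z for every edge uv ∈ E, then the function x defined by x(v) = min(z·w(v)/W, 1) is a fractional vertex cover of G of size at most z. -/
open Finset

def SimpleGraph.IsFractionalVertexCover {V : Type*} (G : SimpleGraph V) (x : V → ℝ) : Prop :=
  (∀ v, 0 ≤ x v ∧ x v ≤ 1) ∧ ∀ ⦃u v : V⦄, G.Adj u v → 1 ≤ x u + x v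

lemma one_le_min_one_add_min_one {a b : ℝ} (ha : 0 ≤ a) (hb : 0 ≤ b) (hab : 1 ≤ a + b) :
    1 ≤ min a 1 + min b 1 := by
  rcases le_total a 1 with ha1 | ha1 <;> rcases le_total b 1 with hb1 | hb1 <;>
    simp only [min_eq_left, min_eq_right, *] <;> linarith

lemma sum_min_mul_div_sum_le {V : Type*} [Fintype V] (w : V → ℝ) {z : ℝ} (hz : 0 ≤ z) :
    ∑ v, min (z * w v / ∑ t, w t) 1 ≤ z := by
  by_cases hW : ∑ t, w t = 0
  · -- every term is `min (_ / 0) 1 = 0`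
    simpa [hW] using hz
  calc ∑ v, min (z * w v / ∑ t, w t) 1
      ≤ ∑ v, z * w v / ∑ t, w t := sum_le_sum fun v _ => min_le_left _ _
    _ = z := by rw [← sum_div, ← mul_sum, mul_div_cancel_right₀ _ hW]

lemma isFractionalVertexCover_min_mul_div_sum {V : Type*} [Fintype V] (G : SimpleGraph V)
    {w : V → ℝ} (hw : ∀ v, 0 < w v) {z : ℝ} (hz : 0 < z)
    (hedge : ∀ ⦃u v : V⦄, G.Adj u v → (∑ t, w t) / z ≤ w u + w v) :
    G.IsFractionalVertexCover fun v => min (z * w v / ∑ t, w t) 1 := by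
  have hx : ∀ v, 0 ≤ z * w v / ∑ t, w t := fun v =>
    div_nonneg (mul_nonneg hz.le (hw v).le) (sum_nonneg fun t _ => (hw t).le)
  refine ⟨fun v => ⟨le_min (hx v) zero_le_one, min_le_right _ _⟩, fun u v huv => ?_⟩
  have hWpos : 0 < ∑ t, w t := sum_pos (fun t _ => hw t) ⟨u, mem_univ u⟩
  refine one_le_min_one_add_min_one (hx u) (hx v) ?_
  rw [← add_div, ← mul_add, le_div_iff₀ hWpos, one_mul, ← div_le_iff₀' hz]
  exact hedge huv

/-- termination guarantee of the MWU algorithm for fractional vertex cover. -/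
theorem stmt_0 {V : Type*} [Fintype V] (G : SimpleGraph V) (w : V → ℝ)
    (hw : ∀ v, 0 < w v) (z : ℝ) (hz : 0 < z)
    (hedge : ∀ ⦃u v : V⦄, G.Adj u v → (∑ t, w t) / z ≤ w u + w v) :
    (∀ v, 0 ≤ min (z * w v / (∑ t, w t)) 1 ∧ min (z * w v / (∑ t, w t)) 1 ≤ 1) ∧
    (∀ ⦃u v : V⦄, G.Adj u v →
      1 ≤ min (z * w u / (∑ t, w t)) 1 + min (z * w v / (∑ t, w t)) 1) ∧
    (∑ v, min (z * w v / (∑ t, w t)) 1) ≤ z := by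
  obtain ⟨hrange, hcover⟩ := isFractionalVertexCover_min_mul_div_sum G hw hz hedge
  exact ⟨hrange, hcover, sum_min_mul_div_sum_le w hz.le⟩
end

section
/- Let n ≥ 2 be a natural number and let δ, z*, z, t be real numbers with 0 < δ ≤ 1, z* > 0, t ≥ 0, and z ≥ (1+δ)·z*. If (1+δ)^{t/z*} ≤ (1+δ/z)^t · n, then t ≤ 8·z*·ln(n)/δ². -/
lemma key_log_bound {δ : ℝ} (hδ0 : 0 < δ) (hδ1 : δ ≤ 1) :
    δ / (1 + δ) + δ ^ 2 / 8 ≤ Real.log (1 + δ) := by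
  have h1δ : (0:ℝ) < 1 + δ := by linarith
  set s : ℝ := δ / (1 + δ) + δ ^ 2 / 8 with hs
  have hδ2 : δ ^ 2 ≤ 1 := by nlinarith
  have hsδ : δ / (1 + δ) ≤ δ := by
    rw [div_le_iff₀ h1δ]; nlinarith
  have hs0 : 0 ≤ s := by positivity
  have hhalf : δ / (1 + δ) ≤ 1 / 2 := by
    rw [div_le_div_iff₀ h1δ (by norm_num)]; nlinarith
  have hs1 : s ≤ 1 := by rw [hs]; linarith
  rw [Real.le_log_iff_exp_le h1δ]
  have hb := Real.exp_bound' hs0 hs1 (n := 3) (by norm_num)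
  have hexp : Real.exp s ≤ 1 + s + s ^ 2 / 2 + 2 * s ^ 3 / 9 := by
    refine hb.trans_eq ?_
    simp [Finset.sum_range_succ, Nat.factorial]
    ring
  refine hexp.trans ?_
  -- polynomial inequality: 1 + s + s²/2 + 2s³/9 ≤ 1 + δ  with s = δ/(1+δ) + δ²/8
  have e1 : s * (1 + δ) = δ + δ ^ 2 / 8 + δ ^ 3 / 8 := by
    rw [hs]; field_simp; ring
  have e2 : s ^ 2 * (1 + δ) ^ 2 = (δ + δ ^ 2 / 8 + δ ^ 3 / 8) ^ 2 := by
    rw [← e1]; ring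
  have e3 : s ^ 3 * (1 + δ) ^ 3 = (δ + δ ^ 2 / 8 + δ ^ 3 / 8) ^ 3 := by
    rw [← e1]; ring
  have expand : (s + s ^ 2 / 2 + 2 * s ^ 3 / 9) * (1 + δ) ^ 3 =
      (δ + δ ^ 2 / 8 + δ ^ 3 / 8) * (1 + δ) ^ 2
      + (δ + δ ^ 2 / 8 + δ ^ 3 / 8) ^ 2 * (1 + δ) / 2
      + 2 * (δ + δ ^ 2 / 8 + δ ^ 3 / 8) ^ 3 / 9 := by
    linear_combination ((1 + δ) ^ 2) * e1 + ((1 + δ) / 2) * e2 + (2 / 9 : ℝ) * e3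
  have hpow : ∀ k : ℕ, 3 ≤ k → δ ^ k ≤ δ ^ 3 := fun k hk =>
    pow_le_pow_of_le_one hδ0.le hδ1 hk
  have h4 := hpow 4 (by norm_num)
  have h5 := hpow 5 (by norm_num)
  have h6 := hpow 6 (by norm_num)
  have h7 := hpow 7 (by norm_num)
  have h8 := hpow 8 (by norm_num)
  have h9 := hpow 9 (by norm_num)
  have hd2 : 0 ≤ δ ^ 2 := sq_nonneg δ
  have hd3 : 0 ≤ δ ^ 3 := by positivity
  have key : (s + s ^ 2 / 2 + 2 * s ^ 3 / 9) * (1 + δ) ^ 3 ≤ δ * (1 + δ) ^ 3 := by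
    rw [expand]; nlinarith [h4, h5, h6, h7, h8, h9, hd2, hd3, hδ0.le]
  have := le_of_mul_le_mul_right key (pow_pos h1δ 3)
  linarith

/-- iteration-count bound in the MWU algorithm for fractional vertex cover. -/
theorem stmt_2 (n : ℕ) (hn : 2 ≤ n) (δ zstar z t : ℝ)
    (hδ0 : 0 < δ) (hδ1 : δ ≤ 1) (hzstar : 0 < zstar) (ht : 0 ≤ t)
    (hz : (1 + δ) * zstar ≤ z)
    (h : (1 + δ) ^ (t / zstar) ≤ (1 + δ / z) ^ t * (n : ℝ)) :
    t ≤ 8 * zstar * Real.log n / δ ^ 2 := by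
  have h1δ : (0:ℝ) < 1 + δ := by linarith
  have hzpos : 0 < z := lt_of_lt_of_le (by nlinarith) hz
  have hbase : (0:ℝ) < 1 + δ / z := by positivity
  have hn0 : (0:ℝ) < n := by exact_mod_cast Nat.lt_of_lt_of_le (by norm_num) hn
  have hlhs : (0:ℝ) < (1 + δ) ^ (t / zstar) := Real.rpow_pos_of_pos h1δ _
  -- take logs
  have hlog : (t / zstar) * Real.log (1 + δ) ≤ t * Real.log (1 + δ / z) + Real.log n := by
    have := Real.log_le_log hlhs h
    rwa [Real.log_mul (by positivity) (by positivity), Real.log_rpow h1δ,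
      Real.log_rpow hbase] at this
  -- bound log(1+δ/z)
  have hlog2 : Real.log (1 + δ / z) ≤ δ / z := by
    simpa using Real.log_le_sub_one_of_pos hbase
  have hzz : δ / z ≤ δ / ((1 + δ) * zstar) :=
    div_le_div_of_nonneg_left hδ0.le (by positivity) hz
  have hkey := key_log_bound hδ0 hδ1
  -- combine
  have hmain : t * Real.log (1 + δ) ≤ t * (δ / (1 + δ)) + zstar * Real.log n := by
    have hb : Real.log (1 + δ / z) ≤ δ / ((1 + δ) * zstar) := hlog2.trans hzz
    have h6 : t * Real.log (1 + δ / z) ≤ t * (δ / ((1 + δ) * zstar)) :=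
      mul_le_mul_of_nonneg_left hb ht
    have h7 : t * Real.log (1 + δ) = zstar * ((t / zstar) * Real.log (1 + δ)) := by
      field_simp
    have h8 : zstar * (t * (δ / ((1 + δ) * zstar))) = t * (δ / (1 + δ)) := by
      field_simp
    calc t * Real.log (1 + δ) = zstar * ((t / zstar) * Real.log (1 + δ)) := h7
      _ ≤ zstar * (t * Real.log (1 + δ / z) + Real.log n) := by
          exact mul_le_mul_of_nonneg_left hlog hzstar.le
      _ ≤ zstar * (t * (δ / ((1 + δ) * zstar)) + Real.log n) := by
          exact mul_le_mul_of_nonneg_left (by linarith) hzstar.le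
      _ = t * (δ / (1 + δ)) + zstar * Real.log n := by rw [mul_add, h8]
  have hk : t * (δ / (1 + δ) + δ ^ 2 / 8) ≤ t * Real.log (1 + δ) :=
    mul_le_mul_of_nonneg_left hkey ht
  have hfin : t * (δ ^ 2 / 8) ≤ zstar * Real.log n := by nlinarith
  rw [le_div_iff₀ (by positivity : (0:ℝ) < δ ^ 2)]
  linarith
end

section
/- Let G = (V, E) be a finite simple graph, let x be a fractional vertex cover of G, and let α be a real with 0 < α ≤ 1/2. Set L = {v ∈ V : x(v) < α}, H = {v ∈ V : x(v) > 1 − α}, and K = V ∖ (L ∪ H). If S_K ⊆ K covers every edge of G both of whose endpoints lie in K (i.e., S_K is a vertex cover of the induced subgraph G[K]), then S_K ∪ H is a vertex cover of G. -/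
/-- A fractional vertex cover of a simple graph. -/
def IsFracVC {V : Type*} (G : SimpleGraph V) (x : V → ℝ) : Prop :=
  (∀ v, 0 ≤ x v ∧ x v ≤ 1) ∧ ∀ ⦃u v : V⦄, G.Adj u v → 1 ≤ x u + x v

/-- A vertex cover of a simple graph. -/
def IsVC {V : Type*} (G : SimpleGraph V) (S : Set V) : Prop :=
  ∀ ⦃u v : V⦄, G.Adj u v → u ∈ S ∨ v ∈ S

/-- the kernel plus the high side of a fractional vertex cover is a vertex cover. -/
theorem stmt_3 {V : Type*} [Fintype V] (G : SimpleGraph V) (x : V → ℝ)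
    (hx : IsFracVC G x) (α : ℝ) (hα0 : 0 < α) (hα : α ≤ 1 / 2)
    (L H K : Set V)
    (hL : L = {v | x v < α}) (hH : H = {v | 1 - α < x v}) (hK : K = Set.univ \ (L ∪ H))
    (SK : Set V) (hSKsub : SK ⊆ K)
    (hSKcov : ∀ ⦃u v : V⦄, G.Adj u v → u ∈ K → v ∈ K → u ∈ SK ∨ v ∈ SK) :
    IsVC G (SK ∪ H) := by
  intro u v huv
  subst hL hH hK
  by_cases hu : 1 - α < x u
  · exact Or.inl (Or.inr hu)
  by_cases hv : 1 - α < x v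
  · exact Or.inr (Or.inr hv)
  have h1 := hx.2 huv
  have huK : u ∈ Set.univ \ ({v | x v < α} ∪ {v | 1 - α < x v}) := by
    refine ⟨trivial, ?_⟩
    rintro (h | h)
    · exact hv (by simp only [Set.mem_setOf_eq] at h ⊢; linarith)
    · exact hu h
  have hvK : v ∈ Set.univ \ ({v | x v < α} ∪ {v | 1 - α < x v}) := by
    refine ⟨trivial, ?_⟩
    rintro (h | h)
    · exact hu (by simp only [Set.mem_setOf_eq] at h ⊢; linarith)
    · exact hv h
  rcases hSKcov huv huK hvK with h | h
  · exact Or.inl (Or.inl h)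
  · exact Or.inr (Or.inl h)
end

section
/- Let G = (V, E) be a finite simple graph whose vertex set is partitioned into three pairwise disjoint sets L, K, H. Let S* be a vertex cover of G, let c ≥ 1 be a real number, and let S_K ⊆ K be a vertex cover of the induced subgraph G[K] with |S_K| ≤ c·τ(G[K]). Then |S_K ∪ H| ≤ c·(|S*| + |H ∖ S*| − |L ∩ S*|). -/
/-- A vertex cover of the subgraph induced by `K`: a subset of `K` covering all edges
with both endpoints in `K`. -/
def IsVCOn {V : Type*} (G : SimpleGraph V) (K S : Set V) : Prop :=
  S ⊆ K ∧ ∀ ⦃u v : V⦄, G.Adj u v → u ∈ K → v ∈ K → u ∈ S ∨ v ∈ S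

/-- The minimum cardinality of a vertex cover of the subgraph of `G` induced by `K`. -/
noncomputable def tauOn {V : Type*} (G : SimpleGraph V) (K : Set V) : ℕ :=
  sInf {m | ∃ S : Set V, IsVCOn G K S ∧ S.ncard = m}

/-- counting bound for the kernel-based vertex cover. -/
theorem stmt_4 {V : Type*} [Fintype V] (G : SimpleGraph V) (L K H : Set V)
    (hLK : Disjoint L K) (hLH : Disjoint L H) (hKH : Disjoint K H)
    (hpart : L ∪ K ∪ H = Set.univ)
    (Sstar : Set V) (hSstar : IsVC G Sstar)
    (c : ℝ) (hc : 1 ≤ c)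
    (SK : Set V) (hSK : IsVCOn G K SK)
    (hSKsize : (SK.ncard : ℝ) ≤ c * (tauOn G K : ℝ)) :
    ((SK ∪ H).ncard : ℝ) ≤
      c * ((Sstar.ncard : ℝ) + ((H \ Sstar).ncard : ℝ) - ((L ∩ Sstar).ncard : ℝ)) := by
  have hKcov : IsVCOn G K (Sstar ∩ K) :=
    ⟨Set.inter_subset_right, fun u v h hu hv =>
      (hSstar h).imp (fun h' => ⟨h', hu⟩) (fun h' => ⟨h', hv⟩)⟩
  have htau : tauOn G K ≤ (Sstar ∩ K).ncard := Nat.sInf_le ⟨Sstar ∩ K, hKcov, rfl⟩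
  have h2 : (SK.ncard : ℝ) ≤ c * ((Sstar ∩ K).ncard : ℝ) :=
    hSKsize.trans (by
      have : (tauOn G K : ℝ) ≤ ((Sstar ∩ K).ncard : ℝ) := by exact_mod_cast htau
      nlinarith)
  have hdisj : Disjoint SK H := hKH.mono_left hSK.1
  have hcard_union : (SK ∪ H).ncard = SK.ncard + H.ncard :=
    Set.ncard_union_eq hdisj (Set.toFinite _) (Set.toFinite _)
  -- decompose Sstar
  have hSeq : (Sstar ∩ L) ∪ ((Sstar ∩ K) ∪ (Sstar ∩ H)) = Sstar := by
    rw [← Set.inter_union_distrib_left, ← Set.inter_union_distrib_left, ← Set.union_assoc,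
      hpart, Set.inter_univ]
  have hd1 : Disjoint (Sstar ∩ K) (Sstar ∩ H) :=
    (hKH.mono Set.inter_subset_right Set.inter_subset_right)
  have hd2 : Disjoint (Sstar ∩ L) ((Sstar ∩ K) ∪ (Sstar ∩ H)) := by
    refine Disjoint.union_right ?_ ?_
    · exact hLK.mono Set.inter_subset_right Set.inter_subset_right
    · exact hLH.mono Set.inter_subset_right Set.inter_subset_right
  have hScard : Sstar.ncard = (Sstar ∩ L).ncard + (Sstar ∩ K).ncard + (Sstar ∩ H).ncard := by
    conv_lhs => rw [← hSeq]
    rw [Set.ncard_union_eq hd2 (Set.toFinite _) (Set.toFinite _),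
      Set.ncard_union_eq hd1 (Set.toFinite _) (Set.toFinite _)]
    ring
  have hHcard : (H ∩ Sstar).ncard + (H \ Sstar).ncard = H.ncard := by
    rw [← Set.ncard_union_eq (Set.disjoint_sdiff_right.mono_left Set.inter_subset_right) (Set.toFinite _) (Set.toFinite _), Set.inter_union_diff]
  have hcomm1 : (H ∩ Sstar).ncard = (Sstar ∩ H).ncard := by rw [Set.inter_comm]
  have hcomm2 : (L ∩ Sstar).ncard = (Sstar ∩ L).ncard := by rw [Set.inter_comm]
  have hcH : (H.ncard : ℝ) ≤ c * H.ncard := by nlinarith [Nat.cast_nonneg (α := ℝ) H.ncard]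
  push_cast [hcard_union, hScard, ← hHcard, hcomm1, hcomm2]
  nlinarith
end

section
/- Let G = (V, E) be a finite simple graph, let x be a fractional vertex cover of G, let S* be a vertex cover of G, and let λ, α be reals with λ > 0, α > 0, and α + λ ≤ 1/2. Set H = {v ∈ V : x(v) > 1−α}, L = {v ∈ V : x(v) < α}, and L' = {v ∈ V : α ≤ x(v) < α+λ}. Define x' : V → ℝ by x'(v) = x(v) − λ if v ∈ H ∖ S*, x'(v) = x(v) + λ if v ∈ (L ∪ L') ∩ S*, and x'(v) = x(v) otherwise. Then x' is a fractional vertex cover of G, and Σ_{v∈V} x(v) − Σ_{v∈V} x'(v) = λ·(|H ∖ S*| − |(L ∪ L') ∩ S*|). -/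
/-- the modified vector is still a fractional vertex cover, and the drop in
its size equals `λ·(|H ∖ S*| − |(L ∪ L') ∩ S*|)`. -/
theorem stmt_5 {V : Type*} [Fintype V] (G : SimpleGraph V) (x : V → ℝ)
    (hx : IsFracVC G x) (Sstar : Set V) (hSstar : IsVC G Sstar)
    (lam α : ℝ) (hlam : 0 < lam) (hα : 0 < α) (hαlam : α + lam ≤ 1 / 2)
    (H L L' : Set V)
    (hH : H = {v | 1 - α < x v}) (hL : L = {v | x v < α})
    (hL' : L' = {v | α ≤ x v ∧ x v < α + lam})
    (x' : V → ℝ)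
    (hx'1 : ∀ v ∈ H \ Sstar, x' v = x v - lam)
    (hx'2 : ∀ v ∈ (L ∪ L') ∩ Sstar, x' v = x v + lam)
    (hx'3 : ∀ v, v ∉ H \ Sstar → v ∉ (L ∪ L') ∩ Sstar → x' v = x v) :
    IsFracVC G x' ∧
      (∑ v, x v) - (∑ v, x' v) =
        lam * (((H \ Sstar).ncard : ℝ) - (((L ∪ L') ∩ Sstar).ncard : ℝ)) := by
  classical
  obtain ⟨hx01, hxe⟩ := hx
  subst hH hL hL'
  set A : Set V := {v | 1 - α < x v} \ Sstar with hA
  set B : Set V := ({v | x v < α} ∪ {v | α ≤ x v ∧ x v < α + lam}) ∩ Sstar with hB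
  -- membership facts
  have hAx : ∀ v ∈ A, 1 - α < x v := fun v hv => hv.1
  have hBx : ∀ v ∈ B, x v < α + lam := by
    intro v hv
    rcases hv.1 with h | h
    · have : x v < α := h
      linarith
    · exact h.2
  have hnotB : ∀ v, v ∉ B → v ∈ Sstar → α + lam ≤ x v := by
    intro v hv hvS
    by_contra h
    push_neg at h
    apply hv
    refine ⟨?_, hvS⟩
    by_cases hα' : x v < α
    · exact Or.inl hα'
    · exact Or.inr ⟨le_of_not_gt hα', h⟩
  have hge : ∀ v, v ∉ A → x v ≤ x' v := by
    intro v hv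
    by_cases hvB : v ∈ B
    · rw [hx'2 v hvB]; linarith
    · rw [hx'3 v hv hvB]
  refine ⟨⟨?_, ?_⟩, ?_⟩
  · intro v
    by_cases hvA : v ∈ A
    · rw [hx'1 v hvA]
      have := hAx v hvA
      constructor <;> linarith [(hx01 v).2]
    · by_cases hvB : v ∈ B
      · rw [hx'2 v hvB]
        have := hBx v hvB
        constructor <;> linarith [(hx01 v).1]
      · rw [hx'3 v hvA hvB]; exact hx01 v
  · intro u v huv
    have hcov := hSstar huv
    have hsum := hxe huv
    by_cases huA : u ∈ A
    · have huS : u ∉ Sstar := huA.2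
      have hvS : v ∈ Sstar := hcov.resolve_left huS
      have hvA : v ∉ A := fun h => h.2 hvS
      rw [hx'1 u huA]
      by_cases hvB : v ∈ B
      · rw [hx'2 v hvB]; linarith
      · rw [hx'3 v hvA hvB]
        have := hnotB v hvB hvS
        have := hAx u huA
        linarith
    · by_cases hvA : v ∈ A
      · have hvS : v ∉ Sstar := hvA.2
        have huS : u ∈ Sstar := hcov.resolve_right hvS
        rw [hx'1 v hvA]
        by_cases huB : u ∈ B
        · rw [hx'2 u huB]; linarith
        · rw [hx'3 u huA huB]
          have := hnotB u huB huS
          have := hAx v hvA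
          linarith
      · have := hge u huA
        have := hge v hvA
        linarith
  · have key : ∀ v, x v - x' v =
        (if v ∈ A then lam else 0) - (if v ∈ B then lam else 0) := by
      intro v
      by_cases hvA : v ∈ A
      · have hvB : v ∉ B := fun h => absurd (hAx v hvA) (by have := hBx v h; linarith)
        rw [hx'1 v hvA, if_pos hvA, if_neg hvB]; ring
      · by_cases hvB : v ∈ B
        · rw [hx'2 v hvB, if_neg hvA, if_pos hvB]; ring
        · rw [hx'3 v hvA hvB, if_neg hvA, if_neg hvB]; ring
    have hsumA : ∑ v, (if v ∈ A then lam else 0) = lam * (A.ncard : ℝ) := by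
      rw [Finset.sum_ite, Finset.sum_const, Finset.sum_const_zero, add_zero,
        nsmul_eq_mul, mul_comm]
      have h : A.toFinset = Finset.univ.filter (· ∈ A) := by
        ext v; simp
      rw [Set.ncard_eq_toFinset_card', h]
    have hsumB : ∑ v, (if v ∈ B then lam else 0) = lam * (B.ncard : ℝ) := by
      rw [Finset.sum_ite, Finset.sum_const, Finset.sum_const_zero, add_zero,
        nsmul_eq_mul, mul_comm]
      have h : B.toFinset = Finset.univ.filter (· ∈ B) := by
        ext v; simp
      rw [Set.ncard_eq_toFinset_card', h]
    rw [← Finset.sum_sub_distrib]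
    simp only [key]
    rw [Finset.sum_sub_distrib, hsumA, hsumB]
    ring
end

section
/- Let G = (V, E) be a finite simple graph, let δ ≥ 0, and let x be a fractional vertex cover of G whose size is at most (1+δ)·σ, where σ denotes the minimum size of a fractional vertex cover of G. Let S* be a vertex cover of G, and let λ, α be reals with λ > 0, α > 0, and α + λ ≤ 1/2. Set H = {v ∈ V : x(v) > 1−α}, L = {v ∈ V : x(v) < α}, and L' = {v ∈ V : α ≤ x(v) < α+λ}. Then λ·(|H ∖ S*| − |L ∩ S*| − |L' ∩ S*|) ≤ δ·|S*|. -/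
/-- The minimum size of a fractional vertex cover of `G`. -/
noncomputable def fracTau {V : Type*} [Fintype V] (G : SimpleGraph V) : ℝ :=
  sInf {s : ℝ | ∃ x : V → ℝ, IsFracVC G x ∧ (∑ v, x v) = s}

lemma fracTau_le {V : Type*} [Fintype V] (G : SimpleGraph V) (y : V → ℝ)
    (hy : IsFracVC G y) : fracTau G ≤ ∑ v, y v := by
  apply csInf_le
  · refine ⟨0, ?_⟩
    rintro s ⟨z, hz, rfl⟩
    exact Finset.sum_nonneg fun v _ => (hz.1 v).1
  · exact ⟨y, hy, rfl⟩

lemma sum_indicator {V : Type*} [Fintype V] (A : Set V) [DecidablePred (· ∈ A)] (c : ℝ) :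
    ∑ v : V, (if v ∈ A then c else 0) = c * (A.ncard : ℝ) := by
  rw [Finset.sum_ite, Finset.sum_const, Finset.sum_const_zero, add_zero,
    Set.ncard_eq_toFinset_card']
  simp [Set.toFinset, mul_comm]

/-- upper bound on `λ·(|H ∖ S*| − |L ∩ S*| − |L' ∩ S*|)` for an approximately
optimal fractional vertex cover. -/
theorem stmt_6 {V : Type*} [Fintype V] (G : SimpleGraph V) (δ : ℝ) (hδ : 0 ≤ δ)
    (x : V → ℝ) (hx : IsFracVC G x)
    (hxsize : (∑ v, x v) ≤ (1 + δ) * fracTau G)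
    (Sstar : Set V) (hSstar : IsVC G Sstar)
    (lam α : ℝ) (hlam : 0 < lam) (hα : 0 < α) (hαlam : α + lam ≤ 1 / 2)
    (H L L' : Set V)
    (hH : H = {v | 1 - α < x v}) (hL : L = {v | x v < α})
    (hL' : L' = {v | α ≤ x v ∧ x v < α + lam}) :
    lam * (((H \ Sstar).ncard : ℝ) - ((L ∩ Sstar).ncard : ℝ) - ((L' ∩ Sstar).ncard : ℝ))
      ≤ δ * (Sstar.ncard : ℝ) := by
  classical
  -- membership facts
  have hmemH : ∀ v, v ∈ H ↔ 1 - α < x v := fun v => by rw [hH]; rfl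
  have hmemL : ∀ v, v ∈ L ↔ x v < α := fun v => by rw [hL]; rfl
  have hmemL' : ∀ v, v ∈ L' ↔ α ≤ x v ∧ x v < α + lam := fun v => by rw [hL']; rfl
  set A : Set V := H \ Sstar with hAdef
  set B : Set V := (L ∪ L') ∩ Sstar with hBdef
  -- the perturbed fractional cover
  set y : V → ℝ := fun v => if v ∈ A then x v - lam else if v ∈ B then x v + lam else x v
    with hydef
  have hAnotB : ∀ v, v ∈ A → v ∉ B := fun v hv hvB => hv.2 hvB.2
  have hyVC : IsFracVC G y := by
    constructor
    · intro v
      by_cases hvA : v ∈ A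
      · have h1 : 1 - α < x v := (hmemH v).1 hvA.1
        have h2 := (hx.1 v).2
        simp only [hydef, if_pos hvA]
        constructor <;> linarith
      · by_cases hvB : v ∈ B
        · have h1 : x v < α + lam := by
            rcases hvB.1 with h | h
            · have := (hmemL v).1 h; linarith
            · exact ((hmemL' v).1 h).2
          have h0 := (hx.1 v).1
          simp only [hydef, if_neg hvA, if_pos hvB]
          constructor <;> linarith
        · simp only [hydef, if_neg hvA, if_neg hvB]
          exact hx.1 v
    · intro u v huv
      have hedge := hx.2 huv
      have key : ∀ u v : V, G.Adj u v → u ∈ A → 1 ≤ y u + y v := by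
        intro u v huv huA
        have hvS : v ∈ Sstar := by
          rcases hSstar huv with h | h
          · exact absurd h huA.2
          · exact h
        have hvA : v ∉ A := fun hvA => hvA.2 hvS
        have hu1 : 1 - α < x u := (hmemH u).1 huA.1
        have hyu : y u = x u - lam := by simp only [hydef, if_pos huA]
        by_cases hvB : v ∈ B
        · have hyv : y v = x v + lam := by simp only [hydef, if_neg hvA, if_pos hvB]
          have := hx.2 huv
          rw [hyu, hyv]; linarith
        · have hyv : y v = x v := by simp only [hydef, if_neg hvA, if_neg hvB]
          -- v ∈ S* and v ∉ B means v ∉ L ∪ L', so x v ≥ α + lam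
          have hvLL' : v ∉ L ∪ L' := fun h => hvB ⟨h, hvS⟩
          have hv1 : ¬ x v < α := fun h => hvLL' (Or.inl ((hmemL v).2 h))
          have hv2 : ¬ (α ≤ x v ∧ x v < α + lam) :=
            fun h => hvLL' (Or.inr ((hmemL' v).2 h))
          push_neg at hv1 hv2
          have : α + lam ≤ x v := hv2 hv1
          rw [hyu, hyv]; linarith
      by_cases huA : u ∈ A
      · exact key u v huv huA
      · by_cases hvA : v ∈ A
        · have := key v u huv.symm hvA; linarith
        · have h1 : x u ≤ y u := by
            simp only [hydef, if_neg huA]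
            split <;> linarith
          have h2 : x v ≤ y v := by
            simp only [hydef, if_neg hvA]
            split <;> linarith
          linarith
  -- sum of y
  have hsum : ∑ v, y v = (∑ v, x v) - lam * (A.ncard : ℝ) + lam * (B.ncard : ℝ) := by
    have : ∀ v, y v = x v - (if v ∈ A then lam else 0) + (if v ∈ B then lam else 0) := by
      intro v
      by_cases hvA : v ∈ A
      · simp [hydef, hvA, hAnotB v hvA]
      · by_cases hvB : v ∈ B <;> simp [hydef, hvA, hvB]
    rw [Finset.sum_congr rfl fun v _ => this v]
    rw [Finset.sum_add_distrib, Finset.sum_sub_distrib, sum_indicator, sum_indicator]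
  -- ncard of B splits
  have hBcard : (B.ncard : ℝ) = ((L ∩ Sstar).ncard : ℝ) + ((L' ∩ Sstar).ncard : ℝ) := by
    have hBeq : B = (L ∩ Sstar) ∪ (L' ∩ Sstar) := by
      rw [hBdef, Set.union_inter_distrib_right]
    have hdisj : Disjoint (L ∩ Sstar) (L' ∩ Sstar) := by
      rw [Set.disjoint_left]
      rintro v ⟨hvL, -⟩ ⟨hvL', -⟩
      have h1 := (hmemL v).1 hvL
      have h2 := ((hmemL' v).1 hvL').1
      linarith
    rw [hBeq, Set.ncard_union_eq hdisj (Set.toFinite _) (Set.toFinite _)]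
    push_cast; ring
  -- τ ≤ |S*|
  have hτS : fracTau G ≤ (Sstar.ncard : ℝ) := by
    have hz : IsFracVC G (fun v => if v ∈ Sstar then (1 : ℝ) else 0) := by
      constructor
      · intro v; dsimp only; split <;> norm_num
      · intro u v huv
        rcases hSstar huv with h | h
        · have h0 : (0:ℝ) ≤ if v ∈ Sstar then (1:ℝ) else 0 := by split <;> norm_num
          simp [h]; linarith
        · have h0 : (0:ℝ) ≤ if u ∈ Sstar then (1:ℝ) else 0 := by split <;> norm_num
          simp [h]; linarith
    have := fracTau_le G _ hz
    rwa [sum_indicator Sstar 1, one_mul] at this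
  have hτy := fracTau_le G y hyVC
  have hτ0 : 0 ≤ fracTau G := by
    have := fracTau_le G x hx
    by_contra h
    push_neg at h
    nlinarith [Finset.sum_nonneg (fun v (_ : v ∈ Finset.univ) => (hx.1 v).1)]
  have hδτ : δ * fracTau G ≤ δ * (Sstar.ncard : ℝ) := by
    exact mul_le_mul_of_nonneg_left hτS hδ
  rw [hAdef] at hsum
  nlinarith [hsum, hBcard, hτy, hxsize]
end

section
/- Let G = (V, E) be a finite simple graph with minimum vertex cover size τ and minimum fractional vertex cover size σ. Let c ≥ 1 and let δ, γ be reals with 0 < δ ≤ γ/4 and γ ≤ 1/8; set λ = √(γδ). Let x be a fractional vertex cover of G of size at most (1+δ)·σ. Then there exists a real α with 1/2 − γ − λ ≤ α ≤ 1/2 − λ such that, writing L = {v ∈ V : x(v) < α}, H = {v ∈ V : x(v) > 1−α}, and K = V ∖ (L ∪ H): (a) |K| ≤ (2 + 35γ)·τ; and (b) for every set S_K ⊆ K that is a vertex cover of the induced subgraph G[K] with |S_K| ≤ c·τ(G[K]), the set S_K ∪ H is a vertex cover of G of cardinality at most c·(1 + 17·√(δ/γ))·τ. -/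
/-- The minimum cardinality of a vertex cover of `G`. -/
noncomputable def tau {V : Type*} (G : SimpleGraph V) : ℕ :=
  sInf {m | ∃ S : Set V, IsVC G S ∧ S.ncard = m}

/-! A vertex of the kernel `K` has value at least `α`, so `|K| ≤ Σ x / α ≤ (1 + δ) τ / α`.
For the cover `SK ∪ H` compare with a minimum vertex cover `S`: `SK` costs at most `c |S ∩ K|`,
and `H \ S` is paid for by `S ∩ L`. Indeed, raising `x` by `l = √(γδ)` on the vertices of `S`
below `α + l` and lowering it by `l` on the vertices outside `S` above `1 - α + l` gives another
fractional cover, so near-optimality of `x` makes the second set at most `δ τ / l` larger than the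
first. What is left over are the vertices within `l` of the thresholds `α` and `1 - α`; among the
`⌊√(γ / δ)⌋` disjoint such bands with `α ∈ [1/2 - γ, 1/2 - l]` one holds only
`O(√(δ / γ)) · Σ x` vertices, and `α` is chosen there. -/

open scoped Function

lemma sqrt_mul_mul_sqrt_div {γ δ : ℝ} (hγ : 0 < γ) (hδ : 0 ≤ δ) : √(γ * δ) * √(δ / γ) = δ := by
  rw [← Real.sqrt_mul (by positivity), show γ * δ * (δ / γ) = δ ^ 2 by field_simp,
    Real.sqrt_sq hδ]

section Covers

variable {V : Type*} {G : SimpleGraph V} {S K SK : Set V} {x : V → ℝ}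

lemma IsFracVC.nonneg (hx : IsFracVC G x) (v : V) : 0 ≤ x v := (hx.1 v).1

lemma IsFracVC.le_one (hx : IsFracVC G x) (v : V) : x v ≤ 1 := (hx.1 v).2

lemma exists_isVC_ncard_eq_tau (G : SimpleGraph V) : ∃ S, IsVC G S ∧ S.ncard = tau G :=
  Nat.sInf_mem (s := {m | ∃ S : Set V, IsVC G S ∧ S.ncard = m})
    ⟨_, Set.univ, fun _ _ _ => Or.inl trivial, rfl⟩

lemma IsVC.isVCOn_inter (hS : IsVC G S) (K : Set V) : IsVCOn G K (S ∩ K) :=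
  ⟨Set.inter_subset_right, fun _ _ huv hu hv =>
    (hS huv).imp (fun h => ⟨h, hu⟩) (fun h => ⟨h, hv⟩)⟩

lemma IsVCOn.tauOn_le (hS : IsVCOn G K S) : tauOn G K ≤ S.ncard :=
  Nat.sInf_le ⟨S, hS, rfl⟩

lemma IsVCOn.isVC_union_setOf_lt {α : ℝ} (hx : IsFracVC G x)
    (hSK : IsVCOn G {v | α ≤ x v ∧ x v ≤ 1 - α} SK) : IsVC G (SK ∪ {v | 1 - α < x v}) := by
  intro u v huv
  by_cases hu : 1 - α < x u
  · exact Or.inl (Or.inr hu)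
  by_cases hv : 1 - α < x v
  · exact Or.inr (Or.inr hv)
  have hsum := hx.2 huv
  exact (hSK.2 huv ⟨by linarith, not_lt.1 hu⟩ ⟨by linarith, not_lt.1 hv⟩).imp Or.inl Or.inl

lemma IsVC.isFracVC_indicator (hS : IsVC G S) : IsFracVC G (S.indicator fun _ => 1) := by
  refine ⟨fun v => ⟨Set.indicator_nonneg (fun _ _ => zero_le_one) v,
    Set.indicator_le_self' (fun _ _ => zero_le_one) v⟩, fun u v huv => ?_⟩
  rcases hS huv with h | h
  · simp [Set.indicator_of_mem h, Set.indicator_nonneg]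
  · simp [Set.indicator_of_mem h, Set.indicator_nonneg]

variable [Fintype V]

lemma sum_indicator_const (s : Set V) (a : ℝ) :
    ∑ v, s.indicator (fun _ => a) v = a * s.ncard := by
  classical
  simp [Set.indicator_apply, Finset.sum_ite, Set.ncard_eq_toFinset_card', mul_comm]

lemma mul_ncard_le_sum_of_le {s : Set V} {t : ℝ} (hx : ∀ v, 0 ≤ x v) (hs : ∀ v ∈ s, t ≤ x v) :
    t * s.ncard ≤ ∑ v, x v := by
  calc t * s.ncard = ∑ v, s.indicator (fun _ => t) v := (sum_indicator_const s t).symm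
    _ ≤ ∑ v, x v := Finset.sum_le_sum fun v _ => by
      by_cases hv : v ∈ s
      · simpa [hv] using hs v hv
      · simpa [hv] using hx v

lemma fracTau_le_sum (hx : IsFracVC G x) : fracTau G ≤ ∑ v, x v :=
  csInf_le ⟨0, by rintro _ ⟨y, hy, rfl⟩; exact Finset.sum_nonneg fun v _ => hy.nonneg v⟩
    ⟨x, hx, rfl⟩

lemma fracTau_le_tau (G : SimpleGraph V) : fracTau G ≤ tau G := by
  obtain ⟨S, hS, hSτ⟩ := exists_isVC_ncard_eq_tau G
  simpa [sum_indicator_const, hSτ] using fracTau_le_sum hS.isFracVC_indicator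

end Covers

section Perturbation

variable {V : Type*} [Fintype V] {G : SimpleGraph V} {S : Set V} {x : V → ℝ} {α l : ℝ}

lemma mul_ncard_setOf_le_add_sum_sub_fracTau (hS : IsVC G S) (hx : IsFracVC G x) (hl : 0 ≤ l)
    (hα : α + 2 * l ≤ 1) :
    l * {v | v ∉ S ∧ 1 - α + l < x v}.ncard ≤
      l * {v | v ∈ S ∧ x v < α + l}.ncard + (∑ v, x v - fracTau G) := by
  set A := {v | v ∈ S ∧ x v < α + l}
  set B := {v | v ∉ S ∧ 1 - α + l < x v}
  set z : V → ℝ := fun v => x v + A.indicator (fun _ => l) v - B.indicator (fun _ => l) v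
  have hzA : ∀ v ∈ A, z v = x v + l := fun v hv => by
    simp [z, Set.indicator_of_mem hv, Set.indicator_of_notMem (fun h : v ∈ B => h.1 hv.1)]
  have hzB : ∀ v ∈ B, z v = x v - l := fun v hv => by
    simp [z, Set.indicator_of_mem hv, Set.indicator_of_notMem (fun h : v ∈ A => hv.1 h.1)]
  have hz : ∀ v ∉ A, v ∉ B → z v = x v := fun v hA hB => by
    simp [z, Set.indicator_of_notMem hA, Set.indicator_of_notMem hB]
  have hxz : ∀ v ∉ B, x v ≤ z v := fun v hB => by
    by_cases hA : v ∈ A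
    · linarith [hzA v hA]
    · exact (hz v hA hB).ge
  -- Raising `x` by `l` on `A` pays for lowering it by `l` on `B`: an edge from `B` to `S`
  -- ends in `A` or in a vertex of value at least `α + l`.
  have hzcover : IsFracVC G z := by
    refine ⟨fun v => ?_, fun u v huv => ?_⟩
    · by_cases hA : v ∈ A
      · rw [hzA v hA]; constructor <;> linarith [hx.nonneg v, hA.2]
      by_cases hB : v ∈ B
      · rw [hzB v hB]; constructor <;> linarith [hx.le_one v, hB.2]
      · rw [hz v hA hB]; exact hx.1 v
    · wlog huS : u ∈ S generalizing u v
      · rw [add_comm]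
        exact this v u huv.symm ((hS huv).resolve_left huS)
      have hxuv := hx.2 huv
      have huB : u ∉ B := fun h => h.1 huS
      by_cases hvB : v ∈ B
      · rw [hzB v hvB]
        by_cases huA : u ∈ A
        · rw [hzA u huA]; linarith
        · have : α + l ≤ x u := not_lt.1 fun h => huA ⟨huS, h⟩
          linarith [hz u huA huB, hvB.2]
      · linarith [hxz u huB, hxz v hvB]
  have hsum : ∑ v, z v = ∑ v, x v + l * A.ncard - l * B.ncard := by
    simp only [z, Finset.sum_sub_distrib, Finset.sum_add_distrib, sum_indicator_const]
  linarith [fracTau_le_sum hzcover]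

end Perturbation

section Bands

variable {V : Type*}

def band (x : V → ℝ) (α l : ℝ) : Set V :=
  {v | α ≤ x v ∧ x v < α + l} ∪ {v | 1 - α < x v ∧ x v ≤ 1 - α + l}

variable {x : V → ℝ} {l : ℝ}

lemma pairwise_disjoint_band (hl : 0 < l) :
    Pairwise (Disjoint on fun i : ℕ => band x (1 / 2 - (i + 1) * l) l) := by
  have key : ∀ {i j : ℕ}, (i : ℝ) * l < (j + 1) * l → i ≤ j := fun h => by
    exact_mod_cast Nat.lt_succ_iff.1 (by exact_mod_cast lt_of_mul_lt_mul_right h hl.le)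
  intro i j hij
  refine Set.disjoint_left.2 fun v hi hj => hij ?_
  have : (0 : ℝ) ≤ i * l := by positivity
  have : (0 : ℝ) ≤ j * l := by positivity
  rcases hi with ⟨hi₁, hi₂⟩ | ⟨hi₁, hi₂⟩ <;> rcases hj with ⟨hj₁, hj₂⟩ | ⟨hj₁, hj₂⟩
  · exact le_antisymm (key (by linarith)) (key (by linarith))
  · linarith
  · linarith
  · exact le_antisymm (key (by linarith)) (key (by linarith))

variable [Fintype V]

lemma exists_mul_ncard_band_le_sum (hx : ∀ v, 0 ≤ x v) (hl : 0 < l) {N : ℕ} (hN : 0 < N)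
    (hNl : N * l ≤ 1 / 2) :
    ∃ i < N, N * (1 / 2 - N * l) * (band x (1 / 2 - (i + 1) * l) l).ncard ≤ ∑ v, x v := by
  set b : ℕ → Set V := fun i => band x (1 / 2 - (i + 1) * l) l
  have hunion : ⋃ i ∈ Finset.range N, b i ⊆ {v | 1 / 2 - N * l ≤ x v} := by
    simp only [Set.iUnion_subset_iff, Finset.mem_range]
    intro i hi v hv
    have : ((i : ℝ) + 1) * l ≤ N * l :=
      mul_le_mul_of_nonneg_right (by exact_mod_cast hi) hl.le
    have : (0 : ℝ) ≤ (i + 1) * l := by positivity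
    rcases hv with ⟨hv, -⟩ | ⟨hv, -⟩ <;>
      exact (show 1 / 2 - N * l ≤ x v by linarith)
  have hsum : ∑ i ∈ Finset.range N, (b i).ncard ≤ {v | 1 / 2 - N * l ≤ x v}.ncard := by
    rw [← finsum_mem_coe_finset,
      ← (Finset.finite_toSet _).ncard_biUnion (fun _ _ => Set.toFinite _)
        ((pairwise_disjoint_band hl).set_pairwise _)]
    exact Set.ncard_le_ncard hunion
  obtain ⟨i, hi, hib⟩ := Finset.exists_le_of_sum_le (Finset.nonempty_range_iff.2 hN.ne')
    (f := fun i => (N : ℝ) * (b i).ncard)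
    (g := fun _ => ∑ j ∈ Finset.range N, ((b j).ncard : ℝ)) (by simp [Finset.mul_sum])
  refine ⟨i, Finset.mem_range.1 hi, ?_⟩
  calc N * (1 / 2 - N * l) * (b i).ncard = (1 / 2 - N * l) * (N * (b i).ncard) := by ring
    _ ≤ (1 / 2 - N * l) * {v | 1 / 2 - N * l ≤ x v}.ncard :=
      mul_le_mul_of_nonneg_left (hib.trans (by exact_mod_cast hsum)) (by linarith)
    _ ≤ ∑ v, x v := mul_ncard_le_sum_of_le hx fun _ hv => hv

lemma exists_threshold_ncard_band_le (hx : ∀ v, 0 ≤ x v) {γ δ : ℝ} (hδ : 0 < δ)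
    (hδγ : δ ≤ γ / 4) (hγ : γ ≤ 1 / 8) :
    ∃ α, 1 / 2 - γ ≤ α ∧ α ≤ 1 / 2 - √(γ * δ) ∧
      (band x α √(γ * δ)).ncard ≤ 16 / 3 * √(δ / γ) * ∑ v, x v := by
  have hγ0 : 0 < γ := by linarith
  set l := √(γ * δ)
  have hl : 0 < l := Real.sqrt_pos.2 (by positivity)
  have hll : l * l = γ * δ := Real.mul_self_sqrt (by positivity)
  have h2l : 2 * l ≤ γ := by nlinarith
  have hsqrt : √(δ / γ) = l / γ := by
    rw [show δ / γ = (l / γ) ^ 2 by field_simp; linarith, Real.sqrt_sq (by positivity)]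
  -- `N` consecutive bands of width `l` fit between `1/2 - γ` and `1/2`, and `N ≥ γ / (2 l)`.
  set N := ⌊γ / l⌋₊
  have hN2 : 2 ≤ N := Nat.le_floor (by rw [Nat.cast_ofNat, le_div_iff₀ hl]; linarith)
  have hNl : N * l ≤ γ := (le_div_iff₀ hl).1 (Nat.floor_le (by positivity))
  have hγN : γ ≤ 2 * N * l := by
    have := (div_lt_iff₀ hl).1 (Nat.lt_floor_add_one (γ / l))
    have : (2 : ℝ) ≤ N := by exact_mod_cast hN2
    nlinarith
  obtain ⟨i, hi, hband⟩ := exists_mul_ncard_band_le_sum hx hl (N := N) (by omega) (by linarith)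
  have hil : ((i : ℝ) + 1) * l ≤ N * l :=
    mul_le_mul_of_nonneg_right (by exact_mod_cast hi) hl.le
  have hi0 : (0 : ℝ) ≤ i * l := by positivity
  refine ⟨1 / 2 - (i + 1) * l, by linarith, by linarith, ?_⟩
  set k : ℝ := ((band x (1 / 2 - (i + 1) * l) l).ncard : ℝ)
  have hk : 0 ≤ k := Nat.cast_nonneg _
  rw [hsqrt, show 16 / 3 * (l / γ) * ∑ v, x v = 16 / 3 * l * (∑ v, x v) / γ by ring,
    le_div_iff₀ hγ0]
  calc k * γ ≤ 16 / 3 * l * (N * (3 / 8) * k) := by nlinarith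
    _ ≤ 16 / 3 * l * (N * (1 / 2 - N * l) * k) := by gcongr; linarith
    _ ≤ 16 / 3 * l * ∑ v, x v := by gcongr

end Bands

section Counting

variable {V : Type*} [Fintype V] {S : Set V} {x : V → ℝ} {α l : ℝ}

lemma ncard_setOf_mem_Icc_le (hx : ∀ v, 0 ≤ x v) {γ δ T : ℝ} (hα : 1 / 2 - γ ≤ α)
    (hγ₀ : 0 ≤ γ) (hδγ : δ ≤ γ / 4) (hγ : γ ≤ 1 / 8) (hT : 0 ≤ T) (hxT : ∑ v, x v ≤ (1 + δ) * T) :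
    ({v | α ≤ x v ∧ x v ≤ 1 - α}.ncard : ℝ) ≤ (2 + 35 * γ) * T := by
  set k : ℝ := ({v | α ≤ x v ∧ x v ≤ 1 - α}.ncard : ℝ)
  have hk : (1 / 2 - γ) * k ≤ (1 + δ) * T :=
    calc (1 / 2 - γ) * k ≤ α * k := by gcongr
      _ ≤ ∑ v, x v := mul_ncard_le_sum_of_le hx fun _ hv => hv.1
      _ ≤ (1 + δ) * T := hxT
  have hconst : 1 + δ ≤ (1 / 2 - γ) * (2 + 35 * γ) := by nlinarith
  refine le_of_mul_le_mul_left (hk.trans ?_) (by linarith : (0 : ℝ) < 1 / 2 - γ)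
  rw [← mul_assoc]
  exact mul_le_mul_of_nonneg_right hconst hT

lemma ncard_setOf_lt_add_ncard_le (hα : α + l ≤ 1 - α) :
    {v | 1 - α < x v}.ncard + {v | v ∈ S ∧ x v < α + l}.ncard ≤
      (S \ {v | α ≤ x v ∧ x v ≤ 1 - α}).ncard + (band x α l).ncard +
        {v | v ∉ S ∧ 1 - α + l < x v}.ncard := by
  rw [← Set.ncard_union_eq (Set.disjoint_left.2 fun v hH hA => by
    linarith [show 1 - α < x v from hH, hA.2])]
  refine (Set.ncard_le_ncard fun v hv => ?_).trans
    ((Set.ncard_union_le _ _).trans (Nat.add_le_add_right (Set.ncard_union_le _ _) _))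
  rcases hv with hH | ⟨hS, hA⟩
  · have hH : 1 - α < x v := hH
    by_cases hvS : v ∈ S
    · exact Or.inl (Or.inl ⟨hvS, fun hK => by linarith [hK.2]⟩)
    by_cases hvl : x v ≤ 1 - α + l
    · exact Or.inl (Or.inr (Or.inr ⟨hH, hvl⟩))
    · exact Or.inr ⟨hvS, not_le.1 hvl⟩
  · by_cases hvα : x v < α
    · exact Or.inl (Or.inl ⟨hS, fun hK => by linarith [hK.1]⟩)
    · exact Or.inl (Or.inr (Or.inl ⟨not_lt.1 hvα, hA⟩))

lemma ncard_union_setOf_lt_le {G : SimpleGraph V} (hS : IsVC G S) (hx : IsFracVC G x)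
    (hl : 0 < l) (hα₀ : 0 ≤ α) (hα : α ≤ 1 / 2 - l) {c : ℝ} (hc : 1 ≤ c) {SK : Set V}
    (hSK : (SK.ncard : ℝ) ≤ c * tauOn G {v | α ≤ x v ∧ x v ≤ 1 - α}) :
    ((SK ∪ {v | 1 - α < x v}).ncard : ℝ) ≤
      c * S.ncard + (band x α l).ncard + (∑ v, x v - fracTau G) / l := by
  set K := {v | α ≤ x v ∧ x v ≤ 1 - α}
  set A := {v | v ∈ S ∧ x v < α + l}
  set B := {v | v ∉ S ∧ 1 - α + l < x v}
  have hunion : ((SK ∪ {v | 1 - α < x v}).ncard : ℝ) ≤ SK.ncard + {v | 1 - α < x v}.ncard := by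
    exact_mod_cast Set.ncard_union_le _ _
  have hSK' : (SK.ncard : ℝ) ≤ c * (S ∩ K).ncard :=
    hSK.trans (mul_le_mul_of_nonneg_left
      (by exact_mod_cast (hS.isVCOn_inter K).tauOn_le) (by linarith))
  have hHA : ({v | 1 - α < x v}.ncard : ℝ) + A.ncard ≤
      (S \ K).ncard + (band x α l).ncard + B.ncard := by
    exact_mod_cast ncard_setOf_lt_add_ncard_le (by linarith)
  have hBA : (B.ncard : ℝ) ≤ A.ncard + (∑ v, x v - fracTau G) / l := by
    have := mul_ncard_setOf_le_add_sum_sub_fracTau (α := α) hS hx hl.le (by linarith)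
    rw [← sub_le_iff_le_add', le_div_iff₀ hl]
    linarith
  have hsplit : c * S.ncard = c * (S ∩ K).ncard + c * (S \ K).ncard := by
    rw [← Set.ncard_inter_add_ncard_sdiff_eq_ncard S K]
    push_cast
    ring
  have : ((S \ K).ncard : ℝ) ≤ c * (S \ K).ncard :=
    le_mul_of_one_le_left (Nat.cast_nonneg _) hc
  linarith

end Counting

/-- explicit-constant Nemhauser–Trotter kernel from an approximately optimal
fractional vertex cover. -/
theorem stmt_7 {V : Type*} [Fintype V] (G : SimpleGraph V)
    (c δ γ : ℝ) (hc : 1 ≤ c) (hδ0 : 0 < δ) (hδγ : δ ≤ γ / 4) (hγ : γ ≤ 1 / 8)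
    (x : V → ℝ) (hx : IsFracVC G x)
    (hxsize : (∑ v, x v) ≤ (1 + δ) * fracTau G) :
    ∃ α : ℝ, 1 / 2 - γ - Real.sqrt (γ * δ) ≤ α ∧ α ≤ 1 / 2 - Real.sqrt (γ * δ) ∧
      ∀ L H K : Set V, L = {v | x v < α} → H = {v | 1 - α < x v} →
        K = Set.univ \ (L ∪ H) →
        ((K.ncard : ℝ) ≤ (2 + 35 * γ) * (tau G : ℝ)) ∧
        (∀ SK : Set V, IsVCOn G K SK → (SK.ncard : ℝ) ≤ c * (tauOn G K : ℝ) →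
          IsVC G (SK ∪ H) ∧
            ((SK ∪ H).ncard : ℝ) ≤ c * (1 + 17 * Real.sqrt (δ / γ)) * (tau G : ℝ)) := by
  obtain ⟨S, hS, hSτ⟩ := exists_isVC_ncard_eq_tau G
  have hτ : (0 : ℝ) ≤ tau G := Nat.cast_nonneg _
  have hσ : fracTau G ≤ tau G := fracTau_le_tau G
  have hxτ : ∑ v, x v ≤ (1 + δ) * tau G := hxsize.trans (by gcongr)
  obtain ⟨α, hαlo, hαhi, hband⟩ := exists_threshold_ncard_band_le hx.nonneg hδ0 hδγ hγ
  have hγ0 : 0 < γ := by linarith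
  have hl : 0 < √(γ * δ) := Real.sqrt_pos.2 (by nlinarith)
  have hr : 0 ≤ √(δ / γ) := Real.sqrt_nonneg _
  have hlr := sqrt_mul_mul_sqrt_div hγ0 hδ0.le
  refine ⟨α, by linarith, hαhi, ?_⟩
  rintro L H K rfl rfl rfl
  rw [show Set.univ \ ({v | x v < α} ∪ {v | 1 - α < x v}) = {v | α ≤ x v ∧ x v ≤ 1 - α} by
    ext; simp [not_or]]
  refine ⟨?_, fun SK hSK hSKc => ⟨hSK.isVC_union_setOf_lt hx, ?_⟩⟩
  · exact ncard_setOf_mem_Icc_le hx.nonneg hαlo hγ0.le hδγ hγ hτ hxτ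
  · have hε : (∑ v, x v - fracTau G) / √(γ * δ) ≤ √(δ / γ) * tau G := by
      rw [div_le_iff₀ hl]
      calc ∑ v, x v - fracTau G ≤ δ * fracTau G := by linarith
        _ ≤ δ * tau G := by gcongr
        _ = √(δ / γ) * tau G * √(γ * δ) := by linear_combination -(tau G : ℝ) * hlr
    have hb : ((band x α √(γ * δ)).ncard : ℝ) ≤ 6 * √(δ / γ) * tau G :=
      calc _ ≤ 16 / 3 * √(δ / γ) * ((1 + δ) * tau G) := hband.trans (by gcongr)
        _ ≤ 6 * √(δ / γ) * tau G := by nlinarith [mul_nonneg hr hτ]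
    have hunion := ncard_union_setOf_lt_le hS hx hl (by linarith) hαhi hc hSKc
    rw [hSτ] at hunion
    nlinarith [mul_nonneg (mul_nonneg hr hτ) (sub_nonneg.2 hc)]
end

section
/- Let G be a finite simple graph, let ℓ ≥ 0 be an integer, and let M be a matching in G such that there is no M-augmenting path of length at most 2ℓ+1. Then ν(G) ≤ (1 + 1/(ℓ+1))·|M|. -/
/-- A vertex is covered by a set of edges if it lies in one of them. -/
def CoveredBy {V : Type*} (M : Set (Sym2 V)) (v : V) : Prop :=
  ∃ e ∈ M, v ∈ e

/-- A matching of `G`: a set of edges of `G`, no two of which share an endpoint. -/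
def IsMatching {V : Type*} (G : SimpleGraph V) (M : Set (Sym2 V)) : Prop :=
  M ⊆ G.edgeSet ∧ ∀ e ∈ M, ∀ f ∈ M, e ≠ f → ∀ v : V, v ∈ e → v ∉ f

section Aux
variable {V : Type*} {G : SimpleGraph V} {M N P : Set (Sym2 V)}

lemma coveredBy_iff {v : V} : CoveredBy P v ↔ ∃ u, s(v, u) ∈ P := by
  constructor
  · rintro ⟨e, he, hv⟩
    obtain ⟨u, rfl⟩ := Sym2.mem_iff_exists.mp hv
    exact ⟨u, he⟩
  · rintro ⟨u, hu⟩
    exact ⟨_, hu, by simp⟩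

lemma matching_edge_eq (hP : IsMatching G P) {e f : Sym2 V} {v : V}
    (he : e ∈ P) (hf : f ∈ P) (hve : v ∈ e) (hvf : v ∈ f) : e = f := by
  by_contra h
  exact hP.2 e he f hf h v hve hvf

lemma matching_unique (hP : IsMatching G P) {v x y : V}
    (hx : s(v, x) ∈ P) (hy : s(v, y) ∈ P) : x = y := by
  have := matching_edge_eq hP hx hy (Sym2.mem_mk_left v x) (Sym2.mem_mk_left v y)
  exact Sym2.congr_right.mp this

lemma matching_ne (hP : IsMatching G P) {a b : V} (h : s(a, b) ∈ P) : a ≠ b := by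
  intro hab
  subst hab
  exact G.irrefl ((G.mem_edgeSet).mp (hP.1 h))

open Classical in
noncomputable def partner (P : Set (Sym2 V)) (v : V) : V :=
  if h : ∃ u, s(v, u) ∈ P then h.choose else v

lemma partner_mem {v : V} (h : ∃ u, s(v, u) ∈ P) : s(v, partner P v) ∈ P := by
  rw [partner, dif_pos h]
  exact h.choose_spec

lemma partner_eq (hP : IsMatching G P) {v x : V} (hx : s(v, x) ∈ P) :
    partner P v = x :=
  matching_unique hP (partner_mem ⟨x, hx⟩) hx

/-- The alternating walk: start at `u`, follow `N`, then `M`, then `N`, ... -/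
noncomputable def awalk (M N : Set (Sym2 V)) (u : V) : ℕ → V
  | 0 => u
  | n + 1 => if Even n then partner N (awalk M N u n) else partner M (awalk M N u n)

lemma awalk_zero (u : V) : awalk M N u 0 = u := rfl

lemma awalk_even_succ (u : V) (i : ℕ) :
    awalk M N u (2 * i + 1) = partner N (awalk M N u (2 * i)) := by
  rw [awalk, if_pos (even_two_mul i)]

lemma awalk_odd_succ (u : V) (i : ℕ) :
    awalk M N u (2 * i + 2) = partner M (awalk M N u (2 * i + 1)) := by
  rw [awalk, if_neg (by simp [Nat.even_add_one, Nat.even_add_one])]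

/-- Alternation invariant of the walk up to index `L`. -/
def AltInv (M N : Set (Sym2 V)) (u : V) (L : ℕ) : Prop :=
  (∀ i, 2 * i + 1 ≤ L → s(awalk M N u (2 * i), awalk M N u (2 * i + 1)) ∈ N) ∧
  (∀ i, 2 * i + 2 ≤ L → s(awalk M N u (2 * i + 1), awalk M N u (2 * i + 2)) ∈ M)

end Aux

section Inj
variable {V : Type*} {G : SimpleGraph V} {M N : Set (Sym2 V)}

lemma awalk_inj (hM : IsMatching G M) (hN : IsMatching G N) {u : V}
    (hu : ¬ CoveredBy M u) {L : ℕ} (hinv : AltInv M N u L) :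
    ∀ p ≤ L, ∀ q ≤ L, awalk M N u p = awalk M N u q → p = q := by
  set w := awalk M N u with hw
  have invN' : ∀ j, Even j → j + 1 ≤ L → s(w j, w (j + 1)) ∈ N := by
    rintro j ⟨i, rfl⟩ hjL
    have e : i + i = 2 * i := by ring
    rw [e]
    exact hinv.1 i (by omega)
  have invM' : ∀ j, Odd j → j + 1 ≤ L → s(w j, w (j + 1)) ∈ M := by
    rintro j ⟨i, rfl⟩ hjL
    have := hinv.2 i (by omega)
    rwa [show 2 * i + 2 = 2 * i + 1 + 1 from rfl] at this
  have key : ∀ q, ∀ p, p < q → q ≤ L → w p ≠ w q := by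
    intro q
    induction q using Nat.strong_induction_on with
    | _ q ih =>
      intro p hpq hqL heq
      rcases Nat.even_or_odd p with hp | hp <;> rcases Nat.even_or_odd q with hq | hq
      · -- even / even
        obtain ⟨a, rfl⟩ := hp
        obtain ⟨b, rfl⟩ := hq
        have hMq : s(w (b + b - 1), w (b + b)) ∈ M := by
          have := invM' (b + b - 1) ⟨b - 1, by omega⟩ (by omega)
          rwa [show b + b - 1 + 1 = b + b from by omega] at this
        rcases Nat.eq_zero_or_pos a with ha | ha
        · subst ha
          exact hu ⟨_, hMq, by rw [show u = w (b + b) from heq]; exact Sym2.mem_mk_right _ _⟩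
        · have hMp : s(w (a + a - 1), w (a + a)) ∈ M := by
            have := invM' (a + a - 1) ⟨a - 1, by omega⟩ (by omega)
            rwa [show a + a - 1 + 1 = a + a from by omega] at this
          rw [heq] at hMp
          have h1 : s(w (b + b), w (a + a - 1)) ∈ M := Sym2.eq_swap ▸ hMp
          have h2 : s(w (b + b), w (b + b - 1)) ∈ M := Sym2.eq_swap ▸ hMq
          exact ih (b + b - 1) (by omega) (a + a - 1) (by omega) (by omega)
            (matching_unique hM h1 h2)
      · -- even / odd
        obtain ⟨a, rfl⟩ := hp
        obtain ⟨b, rfl⟩ := hq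
        have hNq : s(w (2 * b + 1 - 1), w (2 * b + 1)) ∈ N := by
          have := invN' (2 * b) ⟨b, by omega⟩ (by omega)
          rwa [show 2 * b + 1 - 1 = 2 * b from by omega]
        rcases eq_or_lt_of_le (show a + a + 1 ≤ 2 * b + 1 from hpq) with h1 | h1
        · -- q = p + 1 : diagonal edge in N
          have hNp : s(w (a + a), w (a + a + 1)) ∈ N := invN' (a + a) ⟨a, rfl⟩ (by omega)
          rw [← h1] at heq
          exact matching_ne hN hNp heq
        · -- gap ≥ 3
          have hNp : s(w (a + a), w (a + a + 1)) ∈ N := invN' (a + a) ⟨a, rfl⟩ (by omega)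
          rw [heq] at hNp
          have h2 : s(w (2 * b + 1), w (a + a + 1)) ∈ N := Sym2.eq_swap ▸ hNp
          have h3 : s(w (2 * b + 1), w (2 * b + 1 - 1)) ∈ N := Sym2.eq_swap ▸ hNq
          exact ih (2 * b + 1 - 1) (by omega) (a + a + 1) (by omega) (by omega)
            (matching_unique hN h2 h3)
      · -- odd / even
        obtain ⟨a, rfl⟩ := hp
        obtain ⟨b, rfl⟩ := hq
        have hMq : s(w (b + b - 1), w (b + b)) ∈ M := by
          have := invM' (b + b - 1) ⟨b - 1, by omega⟩ (by omega)
          rwa [show b + b - 1 + 1 = b + b from by omega] at this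
        rcases eq_or_lt_of_le (show 2 * a + 1 + 1 ≤ b + b from by omega) with h1 | h1
        · have hMp : s(w (2 * a + 1), w (2 * a + 1 + 1)) ∈ M := invM' (2 * a + 1) ⟨a, rfl⟩ (by omega)
          rw [← h1] at heq
          exact matching_ne hM hMp heq
        · have hMp : s(w (2 * a + 1), w (2 * a + 1 + 1)) ∈ M := invM' (2 * a + 1) ⟨a, rfl⟩ (by omega)
          rw [heq] at hMp
          have h2 : s(w (b + b), w (2 * a + 1 + 1)) ∈ M := Sym2.eq_swap ▸ hMp
          have h3 : s(w (b + b), w (b + b - 1)) ∈ M := Sym2.eq_swap ▸ hMq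
          exact ih (b + b - 1) (by omega) (2 * a + 1 + 1) (by omega) (by omega)
            (matching_unique hM h2 h3)
      · -- odd / odd
        obtain ⟨a, rfl⟩ := hp
        obtain ⟨b, rfl⟩ := hq
        have hNp : s(w (2 * a), w (2 * a + 1)) ∈ N := invN' (2 * a) ⟨a, by omega⟩ (by omega)
        have hNq : s(w (2 * b), w (2 * b + 1)) ∈ N := invN' (2 * b) ⟨b, by omega⟩ (by omega)
        rw [heq] at hNp
        have h2 : s(w (2 * b + 1), w (2 * a)) ∈ N := Sym2.eq_swap ▸ hNp
        have h3 : s(w (2 * b + 1), w (2 * b)) ∈ N := Sym2.eq_swap ▸ hNq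
        exact ih (2 * b) (by omega) (2 * a) (by omega) (by omega)
          (matching_unique hN h2 h3)
  intro p hp q hq heq
  rcases lt_trichotomy p q with h | h | h
  · exact absurd heq (key q p h hq)
  · exact h
  · exact absurd heq.symm (key p q h hp)

end Inj

section Back
variable {V : Type*} {G : SimpleGraph V} {M N P : Set (Sym2 V)}

lemma altInv_notM (hM : IsMatching G M) (hN : IsMatching G N) {u : V}
    (hu : ¬ CoveredBy M u) {L : ℕ} (hinv : AltInv M N u L) :
    ∀ i, 2 * i + 1 ≤ L → s(awalk M N u (2 * i), awalk M N u (2 * i + 1)) ∉ M := by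
  set w := awalk M N u with hw
  intro i hi hmem
  rcases Nat.eq_zero_or_pos i with h0 | h0
  · subst h0
    exact hu ⟨_, hmem, by exact Sym2.mem_mk_left _ _⟩
  · have h2 := hinv.2 (i - 1) (by omega)
    rw [show 2 * (i - 1) + 2 = 2 * i from by omega] at h2
    have h3 : s(w (2 * i), w (2 * (i - 1) + 1)) ∈ M := Sym2.eq_swap ▸ h2
    have := matching_unique hM hmem h3
    have := awalk_inj hM hN hu hinv (2 * i + 1) (by omega) (2 * (i - 1) + 1) (by omega) this
    omega

/-- Backward determinism of the alternating walk. -/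
lemma awalk_back (hM : IsMatching G M) (hN : IsMatching G N) {u : V} {L : ℕ}
    (hinv : AltInv M N u L) :
    ∀ m d, 2 * (m + d) + 1 ≤ L →
      awalk M N u (2 * d) =
        partner N ((fun v => partner M (partner N v))^[m] (awalk M N u (2 * (m + d) + 1))) ∧
      awalk M N u (2 * d + 1) =
        (fun v => partner M (partner N v))^[m] (awalk M N u (2 * (m + d) + 1)) := by
  set w := awalk M N u with hw
  set g := fun v : V => partner M (partner N v) with hg
  intro m
  induction m with
  | zero =>
    intro d hd
    rw [show 2 * (0 + d) + 1 = 2 * d + 1 from by omega]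
    simp only [Function.iterate_zero, id_eq]
    refine ⟨?_, by simp⟩
    have h1 := hinv.1 d (by omega)
    have h2 : s(w (2 * d + 1), w (2 * d)) ∈ N := Sym2.eq_swap ▸ h1
    exact (partner_eq hN h2).symm
  | succ m ihm =>
    intro d hd
    have IH := ihm (d + 1) (by omega)
    rw [show 2 * (m + (d + 1)) + 1 = 2 * (m + 1 + d) + 1 from by omega] at IH
    have hiter : g^[m + 1] (w (2 * (m + 1 + d) + 1)) = w (2 * d + 1) := by
      rw [Function.iterate_succ_apply']
      rw [← IH.2]
      have e1 : partner N (w (2 * (d + 1) + 1)) = w (2 * (d + 1)) := by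
        have h1 := hinv.1 (d + 1) (by omega)
        exact partner_eq hN (Sym2.eq_swap ▸ h1)
      rw [hg]
      simp only []
      rw [e1]
      have h2 := hinv.2 d (by omega)
      have h3 : s(w (2 * d + 2), w (2 * d + 1)) ∈ M := Sym2.eq_swap ▸ h2
      rw [show 2 * (d + 1) = 2 * d + 2 from by omega]
      exact partner_eq hM h3
    refine ⟨?_, hiter.symm⟩
    rw [hiter]
    have h1 := hinv.1 d (by omega)
    exact (partner_eq hN (Sym2.eq_swap ▸ h1)).symm

/-- A matching covers exactly twice its cardinality many vertices. -/
lemma ncard_covered [Fintype V] (hG : IsMatching G P) :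
    {v | CoveredBy P v}.ncard = 2 * P.ncard := by
  classical
  obtain ⟨n, hn⟩ : ∃ n, P.ncard = n := ⟨P.ncard, rfl⟩
  rw [hn]
  induction n generalizing P with
  | zero =>
    have : P = ∅ := (Set.ncard_eq_zero (Set.toFinite P)).mp hn
    subst this
    simp [CoveredBy]
  | succ n ih =>
    obtain ⟨e, he⟩ : P.Nonempty := Set.nonempty_of_ncard_ne_zero (by omega)
    obtain ⟨a, b, rfl⟩ : ∃ a b, e = s(a, b) := Sym2.ind (fun x y => ⟨x, y, rfl⟩) e
    have hab : a ≠ b := matching_ne hG he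
    set Q := P \ {s(a, b)} with hQ
    have hQP : Q ⊆ P := Set.diff_subset
    have hQm : IsMatching G Q :=
      ⟨hQP.trans hG.1, fun e' he' f' hf' hne => hG.2 e' (hQP he') f' (hQP hf') hne⟩
    have hQn : Q.ncard = n := by
      rw [hQ, Set.ncard_diff_singleton_of_mem he]
      omega
    have hcov : {v | CoveredBy P v} = {a, b} ∪ {v | CoveredBy Q v} := by
      ext v
      simp only [Set.mem_setOf_eq, Set.mem_union, Set.mem_insert_iff, Set.mem_singleton_iff]
      constructor
      · rintro ⟨f, hf, hvf⟩
        by_cases hfe : f = s(a, b)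
        · subst hfe
          rw [Sym2.mem_iff] at hvf
          tauto
        · exact Or.inr ⟨f, ⟨hf, hfe⟩, hvf⟩
      · rintro ((rfl | rfl) | ⟨f, hf, hvf⟩)
        · exact ⟨_, he, Sym2.mem_mk_left _ _⟩
        · exact ⟨_, he, Sym2.mem_mk_right _ _⟩
        · exact ⟨f, hQP hf, hvf⟩
    have hdisj : Disjoint ({a, b} : Set V) {v | CoveredBy Q v} := by
      rw [Set.disjoint_left]
      rintro v hv ⟨f, hf, hvf⟩
      have hve : v ∈ s(a, b) := by
        rcases hv with rfl | rfl
        · exact Sym2.mem_mk_left _ _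
        · exact Sym2.mem_mk_right _ _
      have : s(a, b) = f := matching_edge_eq hG he (hQP hf) hve hvf
      exact hf.2 this.symm
    rw [hcov, Set.ncard_union_eq hdisj (Set.toFinite _) (Set.toFinite _),
      Set.ncard_pair hab, ih hQm hQn]
    omega

end Back

section Swap
variable {V : Type*} {G : SimpleGraph V} {M N : Set (Sym2 V)}

lemma swap_lemma [Fintype V] (hM : IsMatching G M) (hN : IsMatching G N) {u : V}
    (hu : ¬ CoveredBy M u) {t : ℕ} (ht : 1 ≤ t) (hinv : AltInv M N u (2 * t))
    (hend : ∀ x, s(awalk M N u (2 * t), x) ∉ N) :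
    ∃ N' : Set (Sym2 V), IsMatching G N' ∧ N'.ncard = N.ncard ∧
      (N' \ M).ncard + 1 ≤ (N \ M).ncard := by
  classical
  set w := awalk M N u with hw
  have inj := awalk_inj hM hN hu hinv
  have notM := altInv_notM hM hN hu hinv
  set WN : Set (Sym2 V) := (fun i => s(w (2 * i), w (2 * i + 1))) '' Set.Iio t with hWN
  set WM : Set (Sym2 V) := (fun i => s(w (2 * i + 1), w (2 * i + 2))) '' Set.Iio t with hWM
  have hWNsub : WN ⊆ N := by
    rintro e ⟨i, hi, rfl⟩
    exact hinv.1 i (by simp only [Set.mem_Iio] at hi; omega)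
  have hWMsub : WM ⊆ M := by
    rintro e ⟨i, hi, rfl⟩
    exact hinv.2 i (by simp only [Set.mem_Iio] at hi; omega)
  have hWNM : ∀ e ∈ WN, e ∉ M := by
    rintro e ⟨i, hi, rfl⟩
    exact notM i (by simp only [Set.mem_Iio] at hi; omega)
  have hWMN : ∀ e ∈ WM, e ∉ N := by
    rintro e ⟨i, hi, rfl⟩ hmem
    simp only [Set.mem_Iio] at hi
    have h1 : s(w (2 * i + 1), w (2 * i)) ∈ N := Sym2.eq_swap ▸ hinv.1 i (by omega)
    have h2 := matching_unique hN hmem h1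
    have := inj (2 * i + 2) (by omega) (2 * i) (by omega) h2
    omega
  have hWNcard : WN.ncard = t := by
    rw [hWN, Set.ncard_image_of_injOn, ← Finset.coe_range, Set.ncard_coe_finset,
      Finset.card_range]
    intro i hi j hj hss
    simp only [Set.mem_Iio] at hi hj
    rw [Sym2.eq_iff] at hss
    rcases hss with ⟨h1, _⟩ | ⟨h1, h2⟩
    · have := inj (2 * i) (by omega) (2 * j) (by omega) h1
      omega
    · have := inj (2 * i) (by omega) (2 * j + 1) (by omega) h1
      omega
  have hWMcard : WM.ncard = t := by
    rw [hWM, Set.ncard_image_of_injOn, ← Finset.coe_range, Set.ncard_coe_finset,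
      Finset.card_range]
    intro i hi j hj hss
    simp only [Set.mem_Iio] at hi hj
    rw [Sym2.eq_iff] at hss
    rcases hss with ⟨h1, _⟩ | ⟨h1, h2⟩
    · have := inj (2 * i + 1) (by omega) (2 * j + 1) (by omega) h1
      omega
    · have := inj (2 * i + 1) (by omega) (2 * j + 2) (by omega) h1
      omega
  refine ⟨(N \ WN) ∪ WM, ⟨?_, ?_⟩, ?_, ?_⟩
  · -- subset of edge set
    rintro e (he | he)
    · exact hN.1 he.1
    · exact hM.1 (hWMsub he)
  · -- pairwise disjointness
    have hcross : ∀ f ∈ N \ WN, ∀ i < t, ∀ v, v ∈ f → v ∈ s(w (2 * i + 1), w (2 * i + 2)) →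
        False := by
      rintro f hf i hi v hvf hvm
      rcases Sym2.mem_iff.mp hvm with rfl | rfl
      · have g1 : s(w (2 * i), w (2 * i + 1)) ∈ N := hinv.1 i (by omega)
        have : f = s(w (2 * i), w (2 * i + 1)) :=
          matching_edge_eq hN hf.1 g1 hvf (Sym2.mem_mk_right _ _)
        exact hf.2 ⟨i, Set.mem_Iio.mpr hi, this.symm⟩
      · rcases eq_or_lt_of_le (show i + 1 ≤ t from hi) with h1 | h1
        · refine hend (partner N (w (2 * t))) ?_
          have : w (2 * i + 2) = w (2 * t) := by rw [show 2 * t = 2 * i + 2 from by omega]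
          rw [this] at hvf
          obtain ⟨x, hx⟩ := coveredBy_iff.mp ⟨f, hf.1, hvf⟩
          exact (hend x hx).elim
        · have g2 : s(w (2 * (i + 1)), w (2 * (i + 1) + 1)) ∈ N := hinv.1 (i + 1) (by omega)
          rw [show 2 * (i + 1) = 2 * i + 2 from by omega] at g2
          have : f = s(w (2 * i + 2), w (2 * i + 2 + 1)) :=
            matching_edge_eq hN hf.1 g2 hvf (Sym2.mem_mk_left _ _)
          refine hf.2 ⟨i + 1, Set.mem_Iio.mpr h1, ?_⟩
          show s(w (2 * (i + 1)), w (2 * (i + 1) + 1)) = f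
          rw [this, show 2 * (i + 1) = 2 * i + 2 from by omega]
    rintro e (he | he) f (hf | hf) hne v hve hvf
    · exact hN.2 e he.1 f hf.1 hne v hve hvf
    · obtain ⟨i, hi, rfl⟩ := hf
      exact hcross e he i (Set.mem_Iio.mp hi) v hve hvf
    · obtain ⟨i, hi, rfl⟩ := he
      exact hcross f hf i (Set.mem_Iio.mp hi) v hvf hve
    · obtain ⟨i, hi, rfl⟩ := he
      obtain ⟨j, hj, rfl⟩ := hf
      simp only [Set.mem_Iio] at hi hj
      rcases Sym2.mem_iff.mp hve with h1 | h1 <;> rcases Sym2.mem_iff.mp hvf with h2 | h2 <;>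
        [skip; skip; skip; skip] <;>
      · first
        | (exact hne (by rw [show i = j from by
            have := inj (2 * i + 1) (by omega) (2 * j + 1) (by omega) (h1.symm.trans h2); omega]))
        | (have := inj (2 * i + 1) (by omega) (2 * j + 2) (by omega) (h1.symm.trans h2); omega)
        | (have := inj (2 * i + 2) (by omega) (2 * j + 1) (by omega) (h1.symm.trans h2); omega)
        | (exact hne (by rw [show i = j from by
            have := inj (2 * i + 2) (by omega) (2 * j + 2) (by omega) (h1.symm.trans h2); omega]))
  · -- cardinality preserved
    have hdisj : Disjoint (N \ WN) WM := by
      rw [Set.disjoint_left]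
      rintro e he hem
      exact hWMN e hem he.1
    have htN : t ≤ N.ncard := hWNcard ▸ Set.ncard_le_ncard hWNsub (Set.toFinite _)
    rw [Set.ncard_union_eq hdisj (Set.toFinite _) (Set.toFinite _),
      Set.ncard_diff hWNsub (Set.toFinite _), hWNcard, hWMcard]
    omega
  · -- strictly fewer edges outside M
    have hdiff : ((N \ WN) ∪ WM) \ M = (N \ M) \ WN := by
      ext e
      simp only [Set.mem_diff, Set.mem_union]
      constructor
      · rintro ⟨he | he, hm⟩
        · exact ⟨⟨he.1, hm⟩, he.2⟩
        · exact (hm (hWMsub he)).elim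
      · rintro ⟨⟨hn, hm⟩, hwn⟩
        exact ⟨Or.inl ⟨hn, hwn⟩, hm⟩
    have hWNsubdiff : WN ⊆ N \ M := fun e he => ⟨hWNsub he, hWNM e he⟩
    have htNM : t ≤ (N \ M).ncard := hWNcard ▸ Set.ncard_le_ncard hWNsubdiff (Set.toFinite _)
    rw [hdiff, Set.ncard_diff hWNsubdiff (Set.toFinite _), hWNcard]
    omega

end Swap

/-- An `M`-augmenting walk of length `2k+1` in `G`, encoded by its vertex sequence
`w 0, w 1, …, w (2k+1)`: consecutive vertices are adjacent, the first and last vertices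
are not covered by `M`, and the edges lie alternately outside `M` and in `M`. -/
def IsAugWalk {V : Type*} (G : SimpleGraph V) (M : Set (Sym2 V)) (k : ℕ) (w : ℕ → V) : Prop :=
  (∀ i < 2 * k + 1, G.Adj (w i) (w (i + 1))) ∧
  ¬ CoveredBy M (w 0) ∧ ¬ CoveredBy M (w (2 * k + 1)) ∧
  (∀ i, 2 * i < 2 * k + 1 → s(w (2 * i), w (2 * i + 1)) ∉ M) ∧
  (∀ i, 2 * i + 1 < 2 * k + 1 → s(w (2 * i + 1), w (2 * i + 2)) ∈ M)

/-- An `M`-augmenting path of length `2k+1`: an `M`-augmenting walk with pairwise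
distinct vertices. -/
def IsAugPath {V : Type*} (G : SimpleGraph V) (M : Set (Sym2 V)) (k : ℕ) (w : ℕ → V) : Prop :=
  IsAugWalk G M k w ∧
    ∀ i ≤ 2 * k + 1, ∀ j ≤ 2 * k + 1, w i = w j → i = j

section Alive
variable {V : Type*} {G : SimpleGraph V} {M N : Set (Sym2 V)}

lemma walk_alive [Fintype V] {ℓ : ℕ} (hM : IsMatching G M) (hN : IsMatching G N)
    (hno : ∀ k ≤ ℓ, ∀ w : ℕ → V, ¬ IsAugPath G M k w)
    (hmin : ∀ N' : Set (Sym2 V), IsMatching G N' → N'.ncard = N.ncard →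
      (N \ M).ncard ≤ (N' \ M).ncard)
    {u : V} (hu : ¬ CoveredBy M u) (huN : CoveredBy N u) :
    ∀ j ≤ ℓ + 1, AltInv M N u (2 * j) := by
  set w := awalk M N u with hw
  intro j
  induction j with
  | zero =>
    intro _
    exact ⟨fun i hi => absurd hi (by omega), fun i hi => absurd hi (by omega)⟩
  | succ j IH =>
    intro hj
    have hinv := IH (by omega)
    -- step 1: w (2j) is N-covered
    have hNc : ∃ x, s(w (2 * j), x) ∈ N := by
      by_contra hend
      push_neg at hend
      rcases Nat.eq_zero_or_pos j with h0 | h0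
      · subst h0
        obtain ⟨x, hx⟩ := coveredBy_iff.mp huN
        exact hend x hx
      · obtain ⟨N', hm', hcard', hlt⟩ :=
          swap_lemma hM hN hu h0 hinv (fun x hx => hend x hx)
        have := hmin N' hm' hcard'
        omega
    have hstep1 : s(w (2 * j), w (2 * j + 1)) ∈ N := by
      rw [hw, awalk_even_succ]
      exact partner_mem hNc
    have hinv1 : AltInv M N u (2 * j + 1) := by
      constructor
      · intro i hi
        rcases Nat.lt_or_ge i j with h | h
        · exact hinv.1 i (by omega)
        · have : i = j := by omega
          subst this
          exact hstep1
      · intro i hi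
        exact hinv.2 i (by omega)
    -- step 2: w (2j+1) is M-covered
    have hMc : ∃ x, s(w (2 * j + 1), x) ∈ M := by
      by_contra hend
      push_neg at hend
      refine hno j (by omega) w ⟨⟨?_, ?_, ?_, ?_, ?_⟩, ?_⟩
      · -- adjacency
        intro i hi
        rw [← G.mem_edgeSet]
        rcases Nat.even_or_odd i with ⟨a, rfl⟩ | ⟨a, rfl⟩
        · have : s(w (2 * a), w (2 * a + 1)) ∈ N := hinv1.1 a (by omega)
          rw [show a + a = 2 * a from by ring]
          exact hN.1 this
        · have : s(w (2 * a + 1), w (2 * a + 2)) ∈ M := hinv1.2 a (by omega)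
          rw [show 2 * a + 1 + 1 = 2 * a + 2 from rfl]
          exact hM.1 this
      · exact hu
      · rw [coveredBy_iff]
        push_neg
        exact hend
      · intro i hi
        exact altInv_notM hM hN hu hinv1 i (by omega)
      · intro i hi
        exact hinv1.2 i (by omega)
      · exact awalk_inj hM hN hu hinv1
    have hstep2 : s(w (2 * j + 1), w (2 * j + 2)) ∈ M := by
      rw [hw, show 2 * j + 2 = 2 * j + 1 + 1 from rfl, ← hw]
      rw [hw, awalk_odd_succ]
      exact partner_mem hMc
    constructor
    · intro i hi
      exact hinv1.1 i (by omega)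
    · intro i hi
      rcases Nat.lt_or_ge i j with h | h
      · exact hinv.2 i (by omega)
      · have : i = j := by omega
        subst this
        exact hstep2
end Alive

/-- The maximum cardinality of a matching of `G`. -/
noncomputable def nu {V : Type*} (G : SimpleGraph V) : ℕ :=
  sSup {m | ∃ M : Set (Sym2 V), IsMatching G M ∧ M.ncard = m}

/-- if there is no short augmenting path, the matching is nearly maximum. -/
theorem stmt_8 {V : Type*} [Fintype V] (G : SimpleGraph V) (ℓ : ℕ)
    (M : Set (Sym2 V)) (hM : IsMatching G M)
    (hno : ∀ k ≤ ℓ, ∀ w : ℕ → V, ¬ IsAugPath G M k w) :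
    (nu G : ℝ) ≤ (1 + 1 / (ℓ + 1 : ℝ)) * (M.ncard : ℝ) := by

  classical
  -- a maximum matching exists
  have hSne : ({m | ∃ P : Set (Sym2 V), IsMatching G P ∧ P.ncard = m}).Nonempty :=
    ⟨0, ∅, ⟨Set.empty_subset _, fun e he => absurd he (Set.notMem_empty e)⟩, by simp⟩
  have hSbdd : BddAbove {m | ∃ P : Set (Sym2 V), IsMatching G P ∧ P.ncard = m} := by
    refine ⟨Fintype.card (Sym2 V), ?_⟩
    rintro m ⟨P, hP, rfl⟩
    have := Set.ncard_le_ncard (Set.subset_univ P) (Set.toFinite _)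
    rwa [Set.ncard_univ, Nat.card_eq_fintype_card] at this
  have hnu : nu G ∈ {m | ∃ P : Set (Sym2 V), IsMatching G P ∧ P.ncard = m} :=
    Nat.sSup_mem hSne hSbdd
  obtain ⟨N₀, hN₀, hN₀card⟩ := hnu
  -- pick a maximum matching minimizing the difference with M
  set T : Set ℕ := {t | ∃ P, IsMatching G P ∧ P.ncard = nu G ∧ (P \ M).ncard = t} with hT
  have hTne : T.Nonempty := ⟨_, N₀, hN₀, hN₀card, rfl⟩
  obtain ⟨N, hN, hNcard, hNmin⟩ := Nat.sInf_mem hTne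
  have hmin : ∀ N' : Set (Sym2 V), IsMatching G N' → N'.ncard = N.ncard →
      (N \ M).ncard ≤ (N' \ M).ncard := by
    intro N' h1 h2
    rw [hNmin]
    exact Nat.sInf_le ⟨N', h1, by rw [← hNcard]; exact h2, rfl⟩
  -- the set of vertices covered by N but not by M
  set A : Set V := {v | CoveredBy N v ∧ ¬ CoveredBy M v} with hA
  have hAeq : A = {v | CoveredBy N v} \ {v | CoveredBy M v} := by
    ext v
    simp [hA, Set.mem_diff]
  have hA1 : 2 * N.ncard ≤ A.ncard + 2 * M.ncard := by
    have h := Set.ncard_le_ncard_diff_add_ncard {v | CoveredBy N v} {v | CoveredBy M v}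
      (Set.toFinite _)
    rw [ncard_covered hN, ncard_covered hM, ← hAeq] at h
    exact h
  have halive : ∀ u ∈ A, AltInv M N u (2 * (ℓ + 1)) := fun u hu =>
    walk_alive hM hN hno hmin hu.2 hu.1 (ℓ + 1) le_rfl
  -- main injection : A × [0, ℓ] ↪ M-covered vertices
  have hA2 : A.ncard * (ℓ + 1) ≤ 2 * M.ncard := by
    set CM : Set V := {v | CoveredBy M v} with hCM
    have hfin : A.Finite := Set.toFinite _
    have hfinCM : CM.Finite := Set.toFinite _
    have hmaps : ∀ p ∈ hfin.toFinset ×ˢ Finset.range (ℓ + 1),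
        awalk M N p.1 (2 * p.2 + 1) ∈ hfinCM.toFinset := by
      rintro ⟨u, i⟩ hp
      rw [Finset.mem_product] at hp
      obtain ⟨hu, hi⟩ := hp
      rw [Set.Finite.mem_toFinset] at hu
      rw [Finset.mem_range] at hi
      rw [Set.Finite.mem_toFinset]
      have hinv := halive u hu
      exact ⟨_, hinv.2 i (by omega), Sym2.mem_mk_left _ _⟩
    have hkey : ∀ u ∈ A, ∀ u' ∈ A, ∀ i i' : ℕ, i ≤ i' → i' ≤ ℓ →
        awalk M N u (2 * i + 1) = awalk M N u' (2 * i' + 1) → u = u' ∧ i = i' := by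
      intro u hu u' hu' i i' hii hle heq
      have hinvu := halive u hu
      have hinvu' := halive u' hu'
      have hb1 := (awalk_back hM hN hinvu i 0 (by omega)).1
      rw [show 2 * (i + 0) + 1 = 2 * i + 1 from by omega] at hb1
      have hb2 := (awalk_back hM hN hinvu' i (i' - i) (by omega)).1
      rw [show 2 * (i + (i' - i)) + 1 = 2 * i' + 1 from by omega] at hb2
      rw [← heq, ← hb1] at hb2
      have hzero : awalk M N u (2 * 0) = u := by
        rw [show 2 * 0 = 0 from rfl]
        exact awalk_zero u
      rw [hzero] at hb2
      -- hb2 : awalk M N u' (2 * (i' - i)) = u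
      have hieq : i = i' := by
        by_contra hne
        have hlt : i < i' := by omega
        have hM2 := hinvu'.2 (i' - i - 1) (by omega)
        rw [show 2 * (i' - i - 1) + 2 = 2 * (i' - i) from by omega] at hM2
        refine hu.2 ⟨_, hM2, ?_⟩
        rw [← hb2]
        exact Sym2.mem_mk_right _ _
      refine ⟨?_, hieq⟩
      rw [← hieq, show i - i = 0 from by omega, show 2 * 0 = 0 from rfl] at hb2
      exact hb2.symm
    have hinj : Set.InjOn (fun p : V × ℕ => awalk M N p.1 (2 * p.2 + 1))
        ↑(hfin.toFinset ×ˢ Finset.range (ℓ + 1)) := by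
      rintro ⟨u, i⟩ hp ⟨u', i'⟩ hq heq
      simp only [Finset.coe_product, Set.mem_prod, Set.Finite.coe_toFinset,
        Finset.coe_range, Set.mem_Iio] at hp hq
      rcases le_total i i' with h | h
      · obtain ⟨h1, h2⟩ := hkey u hp.1 u' hq.1 i i' h (by omega) heq
        rw [h1, h2]
      · obtain ⟨h1, h2⟩ := hkey u' hq.1 u hp.1 i' i h (by omega) heq.symm
        rw [h1, h2]
    have hcard := Finset.card_le_card_of_injOn _ hmaps hinj
    rw [Finset.card_product, Finset.card_range, ← Set.ncard_eq_toFinset_card A hfin,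
      ← Set.ncard_eq_toFinset_card CM hfinCM] at hcard
    calc A.ncard * (ℓ + 1) ≤ CM.ncard := hcard
      _ = 2 * M.ncard := ncard_covered hM
  -- conclude
  have h3 : (ℓ + 1) * (2 * N.ncard) ≤ (ℓ + 2) * (2 * M.ncard) := by
    calc (ℓ + 1) * (2 * N.ncard) ≤ (ℓ + 1) * (A.ncard + 2 * M.ncard) :=
          Nat.mul_le_mul_left _ hA1
      _ = A.ncard * (ℓ + 1) + (ℓ + 1) * (2 * M.ncard) := by ring
      _ ≤ 2 * M.ncard + (ℓ + 1) * (2 * M.ncard) := by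
          exact Nat.add_le_add_right hA2 _
      _ = (ℓ + 2) * (2 * M.ncard) := by ring
  have hreal : ((ℓ : ℝ) + 1) * (2 * (N.ncard : ℝ)) ≤ ((ℓ : ℝ) + 2) * (2 * (M.ncard : ℝ)) := by
    exact_mod_cast h3
  have hpos : (0 : ℝ) < (ℓ : ℝ) + 1 := by positivity
  rw [← hNcard]
  rw [show (1 + 1 / ((ℓ : ℝ) + 1)) = ((ℓ : ℝ) + 2) / ((ℓ : ℝ) + 1) from by field_simp; ring]
  rw [div_mul_eq_mul_div, le_div_iff₀ hpos]
  nlinarith [hreal]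
end

section
/- Let G be a finite simple graph, let M be a matching in G, and let Γ be a finite collection of pairwise vertex-disjoint M-augmenting paths. Then the symmetric difference of M with the union of the edge sets of the paths in Γ is a matching in G of cardinality |M| + |Γ|. -/
/-- The set of edges of the path with vertex sequence `w 0, …, w (2k+1)`. -/
def PathEdges {V : Type*} (k : ℕ) (w : ℕ → V) : Set (Sym2 V) :=
  {e | ∃ i < 2 * k + 1, e = s(w i, w (i + 1))}

theorem aug_single {V : Type*} [Fintype V] (G : SimpleGraph V) (M : Set (Sym2 V))
    (hM : IsMatching G M) (k : ℕ) (w : ℕ → V) (hw : IsAugPath G M k w) :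
    IsMatching G (symmDiff M (PathEdges k w)) ∧
      (symmDiff M (PathEdges k w)).ncard = M.ncard + 1 := by
  obtain ⟨⟨hadj, h0, hlast, heven, hodd⟩, hinj⟩ := hw
  set PE := PathEdges k w with hPEdef
  -- any M-edge containing a path vertex is a path edge
  have hcover : ∀ t ≤ 2 * k + 1, ∀ e ∈ M, w t ∈ e → e ∈ PE := by
    intro t ht e he hv
    rcases Nat.eq_or_lt_of_le (Nat.zero_le t) with h0t | h0t
    · exact absurd ⟨e, he, h0t ▸ hv⟩ h0
    rcases Nat.eq_or_lt_of_le ht with hte | hte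
    · exact absurd ⟨e, he, hte ▸ hv⟩ hlast
    -- 1 ≤ t ≤ 2k : find the matched path edge at t
    have hg : ∃ j < 2 * k + 1, s(w j, w (j+1)) ∈ M ∧ w t ∈ s(w j, w (j+1)) := by
      rcases Nat.even_or_odd t with ⟨i, hi⟩ | ⟨i, hi⟩
      · -- t = 2i even, t ≥ 2, use edge t-1 = 2(i-1)+1
        refine ⟨2*(i-1)+1, by omega, ?_, ?_⟩
        · have := hodd (i-1) (by omega); exact this
        · have : 2*(i-1)+1+1 = t := by omega
          rw [this]; exact Sym2.mem_mk_right _ _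
      · refine ⟨2*i+1, by omega, hodd i (by omega), ?_⟩
        have : 2*i+1 = t := by omega
        rw [this]; exact Sym2.mem_mk_left _ _
    obtain ⟨j, hj, hgM, hgv⟩ := hg
    by_cases hef : e = s(w j, w (j+1))
    · exact hef ▸ ⟨j, hj, rfl⟩
    · exact absurd hgv (hM.2 e he _ hgM hef (w t) hv)
  -- injectivity of the edge map
  have hfinj : ∀ a ≤ 2*k, ∀ b ≤ 2*k, s(w a, w (a+1)) = s(w b, w (b+1)) → a = b := by
    intro a ha b hb h
    rw [Sym2.eq_iff] at h
    rcases h with ⟨h1, h2⟩ | ⟨h1, h2⟩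
    · exact hinj a (by omega) b (by omega) h1
    · have e1 := hinj a (by omega) (b+1) (by omega) h1
      have e2 := hinj (a+1) (by omega) b (by omega) h2
      omega
  -- Part 1: matching
  have hmatch : IsMatching G (symmDiff M PE) := by
    constructor
    · intro e he
      rw [Set.mem_symmDiff] at he
      rcases he with ⟨he, _⟩ | ⟨⟨j, hj, rfl⟩, _⟩
      · exact hM.1 he
      · exact (hadj j hj)
    · intro e he f hf hne v hve hvf
      rw [Set.mem_symmDiff] at he hf
      rcases he with ⟨heM, hePE⟩ | ⟨⟨a, ha, rfl⟩, heM⟩ <;>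
        rcases hf with ⟨hfM, hfPE⟩ | ⟨⟨b, hb, rfl⟩, hfM⟩
      · exact hM.2 e heM f hfM hne v hve hvf
      · -- e ∈ M \ PE, f path edge
        rw [Sym2.mem_iff] at hvf
        rcases hvf with h | h
        · exact hePE (hcover b (by omega) e heM (h ▸ hve))
        · exact hePE (hcover (b+1) (by omega) e heM (h ▸ hve))
      · rw [Sym2.mem_iff] at hve
        rcases hve with h | h
        · exact hfPE (hcover a (by omega) f hfM (h ▸ hvf))
        · exact hfPE (hcover (a+1) (by omega) f hfM (h ▸ hvf))
      · -- both unmatched path edges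
        rw [Sym2.mem_iff] at hve hvf
        have hab0 : a ≠ b := fun h => hne (by rw [h])
        have hab : a = b + 1 ∨ a + 1 = b := by
          rcases hve with h1 | h1 <;> rcases hvf with h2 | h2 <;>
          · have := hinj _ (by omega) _ (by omega) (h1.symm.trans h2)
            omega
        rcases hab with hab | hab
        · rcases Nat.even_or_odd b with ⟨i, hi⟩ | ⟨i, hi⟩
          · -- a = b+1 odd? b even ⇒ a = 2i+1 odd ⇒ e ∈ M
            have : (2:ℕ)*i+1 = a := by omega
            exact heM (this ▸ hodd i (by omega))
          · have : (2:ℕ)*i+1 = b := by omega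
            exact hfM (this ▸ hodd i (by omega))
        · rcases Nat.even_or_odd a with ⟨i, hi⟩ | ⟨i, hi⟩
          · have : (2:ℕ)*i+1 = b := by omega
            exact hfM (this ▸ hodd i (by omega))
          · have : (2:ℕ)*i+1 = a := by omega
            exact heM (this ▸ hodd i (by omega))
  refine ⟨hmatch, ?_⟩
  -- cardinality
  have h12 : ∀ i : ℕ, 2*i+1+1 = 2*i+2 := fun i => rfl
  have hPEM : PE \ M = (fun i => s(w (2*i), w (2*i+1))) '' (Set.Iio (k+1)) := by
    ext e
    constructor
    · rintro ⟨⟨j, hj, rfl⟩, hnm⟩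
      rcases Nat.even_or_odd j with ⟨i, hi⟩ | ⟨i, hi⟩
      · refine ⟨i, by simp [Set.mem_Iio]; omega, ?_⟩
        have : (2:ℕ)*i = j := by omega
        subst this
        rfl
      · exfalso
        have : (2:ℕ)*i+1 = j := by omega
        exact hnm (this ▸ (h12 i ▸ hodd i (by omega)))
    · rintro ⟨i, hi, rfl⟩
      simp only [Set.mem_Iio] at hi
      exact ⟨⟨2*i, by omega, rfl⟩, heven i (by omega)⟩
  have hMPE : M ∩ PE = (fun i => s(w (2*i+1), w (2*i+2))) '' (Set.Iio k) := by
    ext e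
    constructor
    · rintro ⟨hm, ⟨j, hj, rfl⟩⟩
      rcases Nat.even_or_odd j with ⟨i, hi⟩ | ⟨i, hi⟩
      · exfalso
        have : (2:ℕ)*i = j := by omega
        exact heven i (by omega) (this ▸ hm)
      · refine ⟨i, by simp [Set.mem_Iio]; omega, ?_⟩
        have : (2:ℕ)*i+1 = j := by omega
        subst this
        rw [h12]
    · rintro ⟨i, hi, rfl⟩
      simp only [Set.mem_Iio] at hi
      refine ⟨?_, ⟨2*i+1, by omega, by rw [h12]⟩⟩
      have := hodd i (by omega)
      rwa [h12] at this
  have h1 : (PE \ M).ncard = k + 1 := by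
    rw [hPEM, Set.ncard_image_of_injOn, ← Finset.coe_Iio, Set.ncard_coe_finset, Nat.card_Iio]
    intro a ha b hb h
    have := hfinj (2*a) (by simp [Set.mem_Iio] at ha; omega)
      (2*b) (by simp [Set.mem_Iio] at hb; omega) h
    omega
  have h2 : (M ∩ PE).ncard = k := by
    rw [hMPE, Set.ncard_image_of_injOn, ← Finset.coe_Iio, Set.ncard_coe_finset, Nat.card_Iio]
    intro a ha b hb h
    simp only [← h12] at h
    have := hfinj (2*a+1) (by simp [Set.mem_Iio] at ha; omega)
      (2*b+1) (by simp [Set.mem_Iio] at hb; omega) h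
    omega
  have hsplit : M.ncard = (M \ PE).ncard + k := by
    have hu : M = (M \ PE) ∪ (M ∩ PE) := by
      ext x; simp only [Set.mem_union, Set.mem_diff, Set.mem_inter_iff]; tauto
    calc M.ncard = ((M \ PE) ∪ (M ∩ PE)).ncard := by rw [← hu]
      _ = (M \ PE).ncard + (M ∩ PE).ncard :=
          Set.ncard_union_eq (by rw [Set.disjoint_left]; rintro x ⟨_, hx⟩ ⟨_, hx'⟩; exact hx hx')
            (Set.toFinite _) (Set.toFinite _)
      _ = (M \ PE).ncard + k := by rw [h2]
  have hN : symmDiff M PE = (M \ PE) ∪ (PE \ M) := by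
    ext x; rw [Set.mem_symmDiff]
    simp only [Set.mem_union, Set.mem_diff]
  have hd : Disjoint (M \ PE) (PE \ M) := by
    rw [Set.disjoint_left]; rintro x ⟨_, hx⟩ ⟨hx', _⟩; exact hx hx'
  rw [hN, Set.ncard_union_eq hd, h1, hsplit]
  omega

/-- augmenting a matching along pairwise vertex-disjoint augmenting paths
yields a matching whose cardinality grows by the number of paths. -/
theorem stmt_10 {V : Type*} [Fintype V] (G : SimpleGraph V)
    (M : Set (Sym2 V)) (hM : IsMatching G M)
    (m : ℕ) (k : ℕ → ℕ) (P : ℕ → ℕ → V)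
    (hP : ∀ i < m, IsAugPath G M (k i) (P i))
    (hdisj : ∀ i < m, ∀ j < m, i ≠ j →
      ∀ a ≤ 2 * k i + 1, ∀ b ≤ 2 * k j + 1, P i a ≠ P j b) :
    IsMatching G (symmDiff M {e | ∃ i < m, e ∈ PathEdges (k i) (P i)}) ∧
      (symmDiff M {e | ∃ i < m, e ∈ PathEdges (k i) (P i)}).ncard = M.ncard + m := by
  induction m with
  | zero =>
    have hE : {e : Sym2 V | ∃ i < 0, e ∈ PathEdges (k i) (P i)} = ∅ := by
      ext e; simp
    have hs : symmDiff M {e : Sym2 V | ∃ i < 0, e ∈ PathEdges (k i) (P i)} = M := by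
      rw [hE]; ext e; rw [Set.mem_symmDiff]; simp
    rw [hs]
    exact ⟨hM, by omega⟩
  | succ n ih =>
    obtain ⟨ihM, ihC⟩ := ih (fun i hi => hP i (by omega))
      (fun i hi j hj hne => hdisj i (by omega) j (by omega) hne)
    set En : Set (Sym2 V) := {e | ∃ i < n, e ∈ PathEdges (k i) (P i)} with hEn
    -- vertices of path n avoid all edges of En
    have hvert : ∀ t ≤ 2 * k n + 1, ∀ e ∈ En, P n t ∉ e := by
      rintro t ht e ⟨j, hj, a, ha, rfl⟩ hmem
      rw [Sym2.mem_iff] at hmem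
      rcases hmem with h | h
      · exact hdisj n (by omega) j (by omega) (by omega) t ht a (by omega) h
      · exact hdisj n (by omega) j (by omega) (by omega) t ht (a+1) (by omega) h
    have hPEn : ∀ e ∈ PathEdges (k n) (P n), e ∉ En := by
      rintro e ⟨a, ha, rfl⟩ he
      exact hvert a (by omega) _ he (Sym2.mem_mk_left _ _)
    have hEsucc : {e : Sym2 V | ∃ i < n + 1, e ∈ PathEdges (k i) (P i)} =
        symmDiff En (PathEdges (k n) (P n)) := by
      ext e
      simp only [Set.mem_setOf_eq, Set.mem_symmDiff]
      constructor
      · rintro ⟨i, hi, he⟩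
        rcases Nat.lt_succ_iff_lt_or_eq.mp hi with hi' | rfl
        · exact Or.inl ⟨⟨i, hi', he⟩, fun h => hPEn e h ⟨i, hi', he⟩⟩
        · exact Or.inr ⟨he, hPEn e he⟩
      · rintro (⟨⟨i, hi, he⟩, _⟩ | ⟨he, _⟩)
        · exact ⟨i, by omega, he⟩
        · exact ⟨n, by omega, he⟩
    obtain ⟨⟨hadj, h0, hlast, heven, hodd⟩, hinj⟩ := hP n (by omega)
    have hw' : IsAugPath G (symmDiff M En) (k n) (P n) := by
      refine ⟨⟨hadj, ?_, ?_, ?_, ?_⟩, hinj⟩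
      · rintro ⟨e, he, hv⟩
        rw [Set.mem_symmDiff] at he
        rcases he with ⟨he, _⟩ | ⟨he, _⟩
        · exact h0 ⟨e, he, hv⟩
        · exact hvert 0 (by omega) e he hv
      · rintro ⟨e, he, hv⟩
        rw [Set.mem_symmDiff] at he
        rcases he with ⟨he, _⟩ | ⟨he, _⟩
        · exact hlast ⟨e, he, hv⟩
        · exact hvert (2 * k n + 1) (by omega) e he hv
      · intro i hi hmem
        rw [Set.mem_symmDiff] at hmem
        rcases hmem with ⟨hm, _⟩ | ⟨hm, _⟩
        · exact heven i hi hm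
        · exact hvert (2*i) (by omega) _ hm (Sym2.mem_mk_left _ _)
      · intro i hi
        rw [Set.mem_symmDiff]
        exact Or.inl ⟨hodd i hi,
          fun h => hvert (2*i+1) (by omega) _ h (Sym2.mem_mk_left _ _)⟩
    obtain ⟨hm1, hc1⟩ := aug_single G (symmDiff M En) ihM (k n) (P n) hw'
    rw [hEsucc, ← symmDiff_assoc]
    exact ⟨hm1, by rw [hc1, ihC]; omega⟩
end

section
/- Let G be a finite simple graph, let ℓ ≥ 0 be an integer, and let M be a matching in G that has no M-augmenting path of length at most 2ℓ−1. Let Γ be a collection of pairwise vertex-disjoint M-augmenting paths of length 2ℓ+1 that is maximal, in the sense that every M-augmenting path of length 2ℓ+1 in G shares a vertex with some path in Γ. Let M' be the symmetric difference of M with the union of the edge sets of the paths in Γ. Then M' is a matching and there is no M'-augmenting path of length at most 2ℓ+1. -/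
/-!
Let `U` be the union of the edge sets of the paths of `Γ`, so `M' = M ∆ U`, `|M'| = |M| + m` and
`|U| = m (2ℓ + 1)`. The engine is a counting form of Berge's lemma: following alternating walks in
`A ∆ B` from the vertices covered by `B` but not by `A` produces an `A`-augmenting path inside
`A ∆ B` whenever `|A| < |B|`; peeling such paths off one at a time shows that a matching `A`
without augmenting paths shorter than `2ℓ + 1` differs from any matching with `d` more edges in
at least `d (2ℓ + 1)` edges.

If `w` is an `M'`-augmenting path with `2k + 1 ≤ 2ℓ + 1` edges, then `M' ∆ E(w)` has `|M| + m + 1`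
edges and differs from `M` exactly in `U ∆ E(w)`, so
`(m + 1)(2ℓ + 1) ≤ |U ∆ E(w)| = m (2ℓ + 1) + 2k + 1 - 2 |U ∩ E(w)|`. Hence `k = ℓ` and `w` shares
no edge with `U`. Every vertex of a path of `Γ` is covered by an `M'`-edge of `U`, and every
`M'`-edge at a vertex of `w` lies on `w`; so `w` avoids the paths of `Γ`, is therefore an
`M`-augmenting path of length `2ℓ + 1`, and contradicts the maximality of `Γ`.
-/

open Set

section

variable {V : Type*} {G : SimpleGraph V} {M N A B S : Set (Sym2 V)}

namespace IsMatching

lemma eq_of_mem (hM : IsMatching G M) {e f : Sym2 V} (he : e ∈ M) (hf : f ∈ M) {v : V}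
    (hve : v ∈ e) (hvf : v ∈ f) : e = f :=
  by_contra fun hef => hM.2 e he f hf hef v hve hvf

lemma eq_of_mk_mem (hM : IsMatching G M) {a b c : V} (hb : s(a, b) ∈ M) (hc : s(a, c) ∈ M) :
    b = c :=
  Sym2.congr_right.mp (hM.eq_of_mem hb hc (Sym2.mem_mk_left _ _) (Sym2.mem_mk_left _ _))

lemma ne_of_mk_mem (hM : IsMatching G M) {a b : V} (h : s(a, b) ∈ M) : a ≠ b :=
  G.ne_of_adj (hM.1 h)

lemma symmDiff (hN : IsMatching G N) (hSN : IsMatching G (S \ N))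
    (hmeet : ∀ e ∈ N, ∀ f ∈ S \ N, ∀ v ∈ e, v ∈ f → e ∈ S) :
    IsMatching G (symmDiff N S) := by
  refine ⟨fun e he => he.elim (fun h => hN.1 h.1) (fun h => hSN.1 h), ?_⟩
  rintro e (he | he) f (hf | hf) hef v hve hvf
  · exact hN.2 e he.1 f hf.1 hef v hve hvf
  · exact he.2 (hmeet e he.1 f hf v hve hvf)
  · exact hf.2 (hmeet f hf.1 e he v hvf hve)
  · exact hSN.2 e he f hf hef v hve hvf

lemma ncard_setOf_coveredBy [Finite V] (hM : IsMatching G M) :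
    {v | CoveredBy M v}.ncard = 2 * M.ncard := by
  have hcov : {v | CoveredBy M v} = ⋃ e ∈ M, {v | v ∈ e} := by
    ext v
    simp [CoveredBy]
  have hdisj : M.PairwiseDisjoint (fun e => {v | v ∈ e}) := fun e he f hf hef =>
    disjoint_left.mpr fun v hve hvf => hM.2 e he f hf hef v hve hvf
  have htwo : ∀ e ∈ M, {v | v ∈ e}.ncard = 2 := by
    intro e he
    induction e using Sym2.ind with
    | _ a b =>
      have hpair : {v | v ∈ s(a, b)} = {a, b} := by
        ext v
        simp
      rw [hpair, ncard_pair (hM.ne_of_mk_mem he)]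
  rw [hcov, (toFinite M).ncard_biUnion (fun _ _ => toFinite _) hdisj, finsum_mem_congr rfl htwo,
    ← finsum_one, mul_finsum_mem' _ _ (toFinite M), mul_one]

end IsMatching

lemma Set.ncard_symmDiff_add_ncard_inter {α : Type*} [Finite α] (N S : Set α) :
    (symmDiff N S).ncard + (S ∩ N).ncard = N.ncard + (S \ N).ncard := by
  rw [Set.symmDiff_def, ncard_union_eq disjoint_sdiff_sdiff, inter_comm,
    ← ncard_inter_add_ncard_sdiff_eq_ncard N S]
  ring

lemma Set.ncard_setOf_exists_lt {α : Type*} [Finite α] {m c : ℕ} {s : ℕ → Set α}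
    (hdisj : (Iio m).PairwiseDisjoint s) (hc : ∀ i < m, (s i).ncard = c) :
    {x | ∃ i < m, x ∈ s i}.ncard = m * c := by
  have hU : {x | ∃ i < m, x ∈ s i} = ⋃ i ∈ Iio m, s i := by
    ext
    simp
  rw [hU, (finite_Iio m).ncard_biUnion (fun _ _ => toFinite _) hdisj,
    finsum_mem_congr rfl fun i (hi : i ∈ Iio m) => (hc i hi).trans (mul_one c).symm,
    ← mul_finsum_mem' _ _ (finite_Iio m), finsum_one, ncard_Iio_nat, mul_comm]

section Path

variable {n k : ℕ} {w : ℕ → V}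

lemma exists_eq_of_mem_pathEdges {e : Sym2 V} (he : e ∈ PathEdges k w) {v : V} (hv : v ∈ e) :
    ∃ a ≤ 2 * k + 1, w a = v := by
  obtain ⟨i, hi, rfl⟩ := he
  rcases Sym2.mem_iff.mp hv with rfl | rfl
  · exact ⟨i, by omega, rfl⟩
  · exact ⟨i + 1, by omega, rfl⟩

lemma exists_even_edge {j : ℕ} (hj : j ≤ 2 * k + 1) :
    ∃ i < 2 * k + 1, Even i ∧ w j ∈ s(w i, w (i + 1)) := by
  obtain ⟨a, rfl | rfl⟩ := Nat.even_or_odd' j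
  · exact ⟨2 * a, by omega, even_two_mul a, Sym2.mem_mk_left _ _⟩
  · exact ⟨2 * a, by omega, even_two_mul a, Sym2.mem_mk_right _ _⟩

lemma exists_odd_edge {j : ℕ} (h0 : 0 < j) (hj : j < 2 * k + 1) :
    ∃ i < 2 * k + 1, Odd i ∧ w j ∈ s(w i, w (i + 1)) := by
  obtain ⟨a, rfl | rfl⟩ := Nat.even_or_odd' j
  · refine ⟨2 * a - 1, by omega, ⟨a - 1, by omega⟩, ?_⟩
    rw [show 2 * a - 1 + 1 = 2 * a by omega]
    exact Sym2.mem_mk_right _ _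
  · exact ⟨2 * a + 1, by omega, odd_two_mul_add_one a, Sym2.mem_mk_left _ _⟩

lemma eq_of_mem_edge_of_mem_edge (hw : InjOn w (Iic n)) {i j : ℕ} (hi : i < n) (hj : j < n)
    (hij : Even i ↔ Even j) {v : V} (hvi : v ∈ s(w i, w (i + 1)))
    (hvj : v ∈ s(w j, w (j + 1))) : i = j := by
  rw [Nat.even_iff, Nat.even_iff] at hij
  have hinj : ∀ a b, a ≤ n → b ≤ n → w a = w b → a = b := fun a b ha hb h => hw ha hb h
  rcases Sym2.mem_iff.mp hvi with rfl | rfl <;> rcases Sym2.mem_iff.mp hvj with h | h <;>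
    have := hinj _ _ (by omega) (by omega) h <;> omega

lemma edge_injOn (hw : InjOn w (Iic n)) : InjOn (fun i => s(w i, w (i + 1))) (Iio n) := by
  intro i hi j hj h
  simp only [mem_Iio] at hi hj
  rcases Sym2.eq_iff.mp h with ⟨h1, -⟩ | ⟨h1, h2⟩
  · exact hw (by simp; omega) (by simp; omega) h1
  · have := hw (by simp; omega) (by simp; omega : j + 1 ∈ Iic n) h1
    have := hw (by simp; omega : i + 1 ∈ Iic n) (by simp; omega) h2
    omega

lemma ncard_pathEdges (hw : InjOn w (Iic (2 * k + 1))) : (PathEdges k w).ncard = 2 * k + 1 :=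
  ncard_eq_of_bijective (fun i _ => s(w i, w (i + 1))) (fun _ ⟨i, hi, he⟩ => ⟨i, hi, he.symm⟩)
    (fun i hi => ⟨i, hi, rfl⟩) (fun _ _ hi hj h => edge_injOn hw hi hj h)

lemma ncard_pathEdges_inter (hw : InjOn w (Iic (2 * k + 1)))
    (hN : ∀ i < 2 * k + 1, s(w i, w (i + 1)) ∈ N ↔ Odd i) :
    (PathEdges k w ∩ N).ncard = k := by
  refine ncard_eq_of_bijective (fun i _ => s(w (2 * i + 1), w (2 * i + 1 + 1))) ?_
    (fun i hi => ⟨⟨2 * i + 1, by omega, rfl⟩, (hN _ (by omega)).mpr (odd_two_mul_add_one i)⟩)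
    (fun i j hi hj h => by
      have := edge_injOn hw (show 2 * i + 1 < 2 * k + 1 by omega)
        (show 2 * j + 1 < 2 * k + 1 by omega) h
      omega)
  rintro _ ⟨⟨i, hi, rfl⟩, hiN⟩
  obtain ⟨a, rfl⟩ := (hN i hi).mp hiN
  exact ⟨a, by omega, rfl⟩

lemma isMatching_of_subset_pathEdges (hw : InjOn w (Iic (2 * k + 1)))
    (hadj : ∀ i < 2 * k + 1, G.Adj (w i) (w (i + 1))) (hS : S ⊆ PathEdges k w)
    (hpar : ∀ i < 2 * k + 1, ∀ j < 2 * k + 1, s(w i, w (i + 1)) ∈ S → s(w j, w (j + 1)) ∈ S →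
      (Even i ↔ Even j)) :
    IsMatching G S := by
  refine ⟨fun e he => ?_, fun e he f hf hef v hve hvf => ?_⟩
  · obtain ⟨i, hi, rfl⟩ := hS he
    exact hadj i hi
  · obtain ⟨i, hi, rfl⟩ := hS he
    obtain ⟨j, hj, rfl⟩ := hS hf
    exact hef (by rw [eq_of_mem_edge_of_mem_edge hw hi hj (hpar i hi j hj he hf) hve hvf])

end Path

section AugmentingPath

variable {k : ℕ} {w : ℕ → V}

lemma IsAugPath.injOn (h : IsAugPath G N k w) : InjOn w (Iic (2 * k + 1)) :=
  fun i hi j hj => h.2 i hi j hj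

namespace IsAugWalk

lemma mem_iff_odd (h : IsAugWalk G N k w) {i : ℕ} (hi : i < 2 * k + 1) :
    s(w i, w (i + 1)) ∈ N ↔ Odd i := by
  obtain ⟨a, rfl | rfl⟩ := Nat.even_or_odd' i
  · exact iff_of_false (h.2.2.2.1 a hi) (Nat.not_odd_iff_even.mpr (even_two_mul a))
  · exact iff_of_true (h.2.2.2.2 a hi) (odd_two_mul_add_one a)

lemma mem_iff_even_of_subset_symmDiff (h : IsAugWalk G A k w)
    (hAB : PathEdges k w ⊆ symmDiff A B) {i : ℕ} (hi : i < 2 * k + 1) :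
    s(w i, w (i + 1)) ∈ B ↔ Even i := by
  have hmem := hAB ⟨i, hi, rfl⟩
  rw [Set.mem_symmDiff] at hmem
  rw [← Nat.not_odd_iff_even, ← h.mem_iff_odd hi]
  tauto

lemma mem_pathEdges_of_mem (hN : IsMatching G N) (h : IsAugWalk G N k w) {e : Sym2 V}
    (he : e ∈ N) {j : ℕ} (hj : j ≤ 2 * k + 1) (hv : w j ∈ e) : e ∈ PathEdges k w := by
  rcases Nat.eq_zero_or_pos j with rfl | h0
  · exact absurd ⟨e, he, hv⟩ h.2.1
  rcases hj.lt_or_eq with hj | rfl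
  · obtain ⟨i, hi, hodd, hvi⟩ := exists_odd_edge h0 hj
    rw [hN.eq_of_mem he ((h.mem_iff_odd hi).mpr hodd) hv hvi]
    exact ⟨i, hi, rfl⟩
  · exact absurd ⟨e, he, hv⟩ h.2.2.1

lemma exists_mem_pathEdges_notMem (h : IsAugWalk G N k w) {j : ℕ} (hj : j ≤ 2 * k + 1) :
    ∃ e ∈ PathEdges k w, e ∉ N ∧ w j ∈ e := by
  obtain ⟨i, hi, heven, hv⟩ := exists_even_edge hj
  exact ⟨_, ⟨i, hi, rfl⟩, by rw [h.mem_iff_odd hi, Nat.not_odd_iff_even]; exact heven, hv⟩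

lemma of_agree {N' : Set (Sym2 V)} (h : IsAugWalk G N k w)
    (hagree : ∀ e, ∀ j ≤ 2 * k + 1, w j ∈ e → (e ∈ N' ↔ e ∈ N)) : IsAugWalk G N' k w := by
  have hcov : ∀ j ≤ 2 * k + 1, CoveredBy N' (w j) → CoveredBy N (w j) :=
    fun j hj ⟨e, he, hv⟩ => ⟨e, (hagree e j hj hv).mp he, hv⟩
  refine ⟨h.1, fun hc => h.2.1 (hcov 0 (by omega) hc), fun hc => h.2.2.1 (hcov _ le_rfl hc),
    fun i hi => ?_, fun i hi => ?_⟩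
  · rw [hagree _ (2 * i) (by omega) (Sym2.mem_mk_left _ _)]
    exact h.2.2.2.1 i hi
  · rw [hagree _ (2 * i + 1) (by omega) (Sym2.mem_mk_left _ _)]
    exact h.2.2.2.2 i hi

end IsAugWalk

namespace IsAugPath

lemma isMatching_pathEdges_sdiff (h : IsAugPath G N k w) : IsMatching G (PathEdges k w \ N) := by
  refine isMatching_of_subset_pathEdges h.injOn h.1.1 sdiff_subset fun i hi j hj hiN hjN => ?_
  rw [← Nat.not_odd_iff_even, ← Nat.not_odd_iff_even, ← h.1.mem_iff_odd hi, ← h.1.mem_iff_odd hj]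
  exact iff_of_true hiN.2 hjN.2

lemma isMatching_symmDiff (hN : IsMatching G N) (h : IsAugPath G N k w) :
    IsMatching G (symmDiff N (PathEdges k w)) := by
  refine hN.symmDiff h.isMatching_pathEdges_sdiff fun e he f hf v hve hvf => ?_
  obtain ⟨a, ha, rfl⟩ := exists_eq_of_mem_pathEdges hf.1 hvf
  exact h.1.mem_pathEdges_of_mem hN he ha hve

lemma ncard_pathEdges_inter_self (h : IsAugPath G N k w) : (PathEdges k w ∩ N).ncard = k :=
  ncard_pathEdges_inter h.injOn fun _ hi => h.1.mem_iff_odd hi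

lemma ncard_pathEdges_sdiff [Finite V] (h : IsAugPath G N k w) :
    (PathEdges k w \ N).ncard = k + 1 := by
  have hsplit := ncard_inter_add_ncard_sdiff_eq_ncard (PathEdges k w) N
  rw [h.ncard_pathEdges_inter_self, ncard_pathEdges h.injOn] at hsplit
  omega

lemma ncard_symmDiff [Finite V] (h : IsAugPath G N k w) :
    (symmDiff N (PathEdges k w)).ncard = N.ncard + 1 := by
  have hsd := ncard_symmDiff_add_ncard_inter N (PathEdges k w)
  rw [h.ncard_pathEdges_inter_self, h.ncard_pathEdges_sdiff] at hsd
  omega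

lemma isMatching_symmDiff_of_subset_symmDiff (hB : IsMatching G B) (h : IsAugPath G A k w)
    (hAB : PathEdges k w ⊆ symmDiff A B) : IsMatching G (symmDiff B (PathEdges k w)) := by
  have hmem := fun i (hi : i < 2 * k + 1) => h.1.mem_iff_even_of_subset_symmDiff hAB hi
  refine hB.symmDiff (isMatching_of_subset_pathEdges h.injOn h.1.1 sdiff_subset ?_) ?_
  · intro i hi j hj hiB hjB
    rw [← hmem i hi, ← hmem j hj]
    exact iff_of_false hiB.2 hjB.2
  · rintro e he _ ⟨⟨i, hi, rfl⟩, hiB⟩ v hve hvi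
    have hodd : ¬ Even i := fun heven => hiB ((hmem i hi).mpr heven)
    obtain ⟨a, ha0, ha, rfl⟩ : ∃ a, 0 < a ∧ a ≤ 2 * k + 1 ∧ w a = v := by
      rw [Nat.not_even_iff_odd] at hodd
      obtain ⟨b, rfl⟩ := hodd
      rcases Sym2.mem_iff.mp hvi with rfl | rfl
      · exact ⟨2 * b + 1, by omega, by omega, rfl⟩
      · exact ⟨2 * b + 1 + 1, by omega, by omega, rfl⟩
    obtain ⟨j, hj, heven, hvj⟩ := exists_even_edge (w := w) ha
    rw [hB.eq_of_mem he ((hmem j hj).mpr heven) hve hvj]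
    exact ⟨j, hj, rfl⟩

lemma ncard_symmDiff_of_subset_symmDiff [Finite V] (h : IsAugPath G A k w)
    (hAB : PathEdges k w ⊆ symmDiff A B) :
    (symmDiff B (PathEdges k w)).ncard + 1 = B.ncard := by
  have hsd := ncard_symmDiff_add_ncard_inter B (PathEdges k w)
  have hsplit := ncard_inter_add_ncard_sdiff_eq_ncard (PathEdges k w) B
  have hout : (PathEdges k w \ B).ncard = k := by
    rw [sdiff_eq, ncard_pathEdges_inter h.injOn fun i hi => ?_]
    rw [mem_compl_iff, h.1.mem_iff_even_of_subset_symmDiff hAB hi, Nat.not_even_iff_odd]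
  rw [hout] at hsd hsplit
  rw [ncard_pathEdges h.injOn] at hsplit
  omega

end IsAugPath

end AugmentingPath

def altMatching (A B : Set (Sym2 V)) (i : ℕ) : Set (Sym2 V) := if Even i then B else A

lemma altMatching_of_even {i : ℕ} (h : Even i) : altMatching A B i = B := if_pos h

lemma altMatching_of_odd {i : ℕ} (h : Odd i) : altMatching A B i = A :=
  if_neg (Nat.not_even_iff_odd.mpr h)

lemma altMatching_congr {i j : ℕ} (h : Even i ↔ Even j) : altMatching A B i = altMatching A B j :=
  if_congr h rfl rfl

lemma altMatching_add_two {i : ℕ} : altMatching A B (i + 2) = altMatching A B i :=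
  altMatching_congr (by rw [Nat.even_add, iff_true_right even_two])

lemma isMatching_altMatching (hA : IsMatching G A) (hB : IsMatching G B) (i : ℕ) :
    IsMatching G (altMatching A B i) := by
  unfold altMatching
  split <;> assumption

/-- Step `i` uses an edge of `B \ A` if `i` is even and of `A \ B` if `i` is odd. -/
structure IsAltWalk (A B : Set (Sym2 V)) (n : ℕ) (w : ℕ → V) : Prop where
  start_free : ¬ CoveredBy A (w 0)
  injOn : InjOn w (Iic n)
  mem : ∀ i < n, s(w i, w (i + 1)) ∈ altMatching A B i
  notMem : ∀ i < n, s(w i, w (i + 1)) ∉ altMatching A B (i + 1)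

namespace IsAltWalk

variable {n : ℕ} {w : ℕ → V}

lemma nil {v : V} (hv : ¬ CoveredBy A v) : IsAltWalk A B 0 (fun _ => v) :=
  ⟨hv, fun i hi j hj _ => by simp_all, fun _ h => absurd h (Nat.not_lt_zero _),
    fun _ h => absurd h (Nat.not_lt_zero _)⟩

lemma lt_card [Finite V] (hw : IsAltWalk A B n w) : n < Nat.card V := by
  have := ncard_le_card (w '' Iic n)
  rw [hw.injOn.ncard_image, ncard_Iic_nat] at this
  omega

lemma notMem_of_mem (hA : IsMatching G A) (hB : IsMatching G B) (hw : IsAltWalk A B n w)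
    {u : V} (hu : s(w n, u) ∈ altMatching A B n) : s(w n, u) ∉ altMatching A B (n + 1) := by
  intro hY
  rcases n with _ | j
  · rw [altMatching_of_odd (i := 0 + 1) odd_one] at hY
    exact hw.start_free ⟨_, hY, Sym2.mem_mk_left _ _⟩
  · have hj := hw.mem j (by omega)
    rw [← altMatching_add_two] at hj
    have heq := (isMatching_altMatching hA hB _).eq_of_mem hY hj (Sym2.mem_mk_left _ _)
      (Sym2.mem_mk_right _ _)
    exact hw.notMem j (by omega) (heq ▸ hu)

lemma ne_of_mem (hA : IsMatching G A) (hB : IsMatching G B) (hw : IsAltWalk A B n w)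
    {u : V} (hu : s(w n, u) ∈ altMatching A B n) {j : ℕ} (hj : j ≤ n) : w j ≠ u := by
  rintro rfl
  have hX := isMatching_altMatching hA hB n
  have hjn : j < n := hj.lt_of_ne fun h => hX.ne_of_mk_mem hu (by rw [h])
  rw [Sym2.eq_swap] at hu
  by_cases hpar : Even j ↔ Even n
  · have hj := hw.mem j hjn
    rw [altMatching_congr hpar] at hj
    have := hw.injOn (show j + 1 ∈ Iic n by simp; omega) (show n ∈ Iic n by simp)
      (hX.eq_of_mk_mem hj hu)
    subst this
    rw [Nat.even_add_one] at hpar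
    exact iff_not_self hpar
  · rcases j with _ | i
    · rw [altMatching_of_odd (Nat.not_even_iff_odd.mp fun h => hpar (iff_of_true Even.zero h))]
        at hu
      exact hw.start_free ⟨_, hu, Sym2.mem_mk_left _ _⟩
    · have hi := hw.mem i (by omega)
      rw [altMatching_congr (show Even i ↔ Even n by rw [Nat.even_add_one] at hpar; tauto),
        Sym2.eq_swap] at hi
      have := hw.injOn (show i ∈ Iic n by simp; omega) (show n ∈ Iic n by simp)
        (hX.eq_of_mk_mem hi hu)
      omega

lemma extend (hA : IsMatching G A) (hB : IsMatching G B) (hw : IsAltWalk A B n w)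
    {u : V} (hu : s(w n, u) ∈ altMatching A B n) :
    IsAltWalk A B (n + 1) (Function.update w (n + 1) u) := by
  have hw' : ∀ i ≤ n, Function.update w (n + 1) u i = w i :=
    fun i hi => Function.update_of_ne (by omega) _ _
  refine ⟨by rw [hw' 0 (by omega)]; exact hw.start_free, ?_, fun i hi => ?_, fun i hi => ?_⟩
  · rw [show Iic (n + 1) = insert (n + 1) (Iic n) by ext; simp; omega,
      injOn_insert (by simp)]
    refine ⟨hw.injOn.congr fun i hi => (hw' i hi).symm, ?_⟩
    rintro ⟨j, hj, hju⟩
    rw [Function.update_self, hw' j hj] at hju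
    exact hw.ne_of_mem hA hB hu hj hju
  · rcases (Nat.lt_succ_iff.mp hi).lt_or_eq with hi | rfl
    · rw [hw' i hi.le, hw' (i + 1) hi]
      exact hw.mem i hi
    · rw [hw' i le_rfl, Function.update_self]
      exact hu
  · rcases (Nat.lt_succ_iff.mp hi).lt_or_eq with hi | rfl
    · rw [hw' i hi.le, hw' (i + 1) hi]
      exact hw.notMem i hi
    · rw [hw' i le_rfl, Function.update_self]
      exact hw.notMem_of_mem hA hB hu

lemma isAugPath (hA : IsMatching G A) (hB : IsMatching G B) {t : ℕ}
    (hw : IsAltWalk A B (2 * t + 1) w) (hend : ¬ CoveredBy A (w (2 * t + 1))) :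
    IsAugPath G A t w ∧ PathEdges t w ⊆ symmDiff A B := by
  have hedge : ∀ i < 2 * t + 1,
      (s(w i, w (i + 1)) ∈ A ↔ Odd i) ∧ s(w i, w (i + 1)) ∈ symmDiff A B := by
    intro i hi
    have hin := hw.mem i hi
    have hout := hw.notMem i hi
    rcases Nat.even_or_odd i with h | h
    · rw [altMatching_of_even h] at hin
      rw [altMatching_of_odd h.add_one] at hout
      exact ⟨iff_of_false hout (Nat.not_odd_iff_even.mpr h), Or.inr ⟨hin, hout⟩⟩
    · rw [altMatching_of_odd h] at hin
      rw [altMatching_of_even h.add_one] at hout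
      exact ⟨iff_of_true hin h, Or.inl ⟨hin, hout⟩⟩
  refine ⟨⟨⟨fun i hi => ?_, hw.start_free, hend, fun i hi => ?_, fun i hi => ?_⟩,
    fun i hi j hj => hw.injOn hi hj⟩, ?_⟩
  · exact (hedge i hi).2.elim (fun h => hA.1 h.1) (fun h => hB.1 h.1)
  · exact fun h => Nat.not_odd_iff_even.mpr (even_two_mul i) (((hedge _ hi).1).mp h)
  · exact (hedge _ hi).1.mpr (odd_two_mul_add_one i)
  · rintro _ ⟨i, hi, rfl⟩
    exact (hedge i hi).2

theorem exists_augPath_or_exists_end [Finite V] (hA : IsMatching G A) (hB : IsMatching G B)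
    {n : ℕ} {w : ℕ → V} (hw : IsAltWalk A B n w) (h0 : CoveredBy B (w 0)) :
    (∃ t w', IsAugPath G A t w' ∧ PathEdges t w' ⊆ symmDiff A B) ∨
      ∃ n' w', IsAltWalk A B n' w' ∧ w' 0 = w 0 ∧ Even n' ∧
        w' n' ∈ {v | CoveredBy A v} \ {v | CoveredBy B v} := by
  by_cases hc : CoveredBy (altMatching A B n) (w n)
  · obtain ⟨e, he, hv⟩ := hc
    obtain ⟨u, rfl⟩ := Sym2.mem_iff_exists.mp hv
    have hw' := hw.extend hA hB he
    have hcard := hw'.lt_card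
    have hstart : Function.update w (n + 1) u 0 = w 0 := Function.update_of_ne (by omega) _ _
    rw [← hstart] at h0 ⊢
    exact hw'.exists_augPath_or_exists_end hA hB h0
  rcases Nat.even_or_odd n with hn | ⟨t, rfl⟩
  · rw [altMatching_of_even hn] at hc
    obtain ⟨j, rfl⟩ : ∃ j, n = j + 1 :=
      Nat.exists_eq_add_one.mpr (Nat.pos_of_ne_zero fun hn0 => hc (hn0 ▸ h0))
    have hlast := hw.mem j (by omega)
    rw [altMatching_of_odd (Nat.even_add_one.mp hn |> Nat.not_even_iff_odd.mp)] at hlast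
    exact Or.inr ⟨j + 1, w, hw, rfl, hn, ⟨_, hlast, Sym2.mem_mk_right _ _⟩, hc⟩
  · rw [altMatching_of_odd (odd_two_mul_add_one t)] at hc
    exact Or.inl ⟨t, w, hw.isAugPath hA hB hc⟩
termination_by Nat.card V - n

lemma start_eq_of_end_eq (hA : IsMatching G A) (hB : IsMatching G B) {n' : ℕ} {w' : ℕ → V}
    (hw : IsAltWalk A B n w) (hw' : IsAltWalk A B n' w') (hn : Even n) (hn' : Even n')
    (hend : w n = w' n') : w 0 = w' 0 := by
  wlog hle : n ≤ n' generalizing n n' w w'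
  · exact (this hw' hw hn' hn hend.symm (by omega)).symm
  rw [Nat.even_iff] at hn hn'
  -- Walking backwards from the common end, each step is the unique edge of the matching in use.
  have hback : ∀ i ≤ n, w (n - i) = w' (n' - i) := by
    intro i
    induction i with
    | zero => simpa using hend
    | succ i ih =>
      intro hi
      have hstep := hw.mem (n - (i + 1)) (by omega)
      have hstep' := hw'.mem (n' - (i + 1)) (by omega)
      rw [show n - (i + 1) + 1 = n - i by omega, ih (by omega), Sym2.eq_swap] at hstep
      rw [show n' - (i + 1) + 1 = n' - i by omega, Sym2.eq_swap,
        altMatching_congr (show Even (n' - (i + 1)) ↔ Even (n - (i + 1)) by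
          rw [Nat.even_iff, Nat.even_iff]; omega)] at hstep'
      exact (isMatching_altMatching hA hB _).eq_of_mk_mem hstep hstep'
  have hstart := hback n le_rfl
  rw [Nat.sub_self] at hstart
  rcases hle.lt_or_eq with hlt | rfl
  · have hlast := hw'.mem (n' - n - 1) (by omega)
    rw [altMatching_of_odd (Nat.odd_iff.mpr (by omega)), show n' - n - 1 + 1 = n' - n by omega,
      ← hstart] at hlast
    exact absurd ⟨_, hlast, Sym2.mem_mk_right _ _⟩ hw.start_free
  · simpa using hstart

end IsAltWalk

theorem exists_augPath_subset_symmDiff [Finite V] (hA : IsMatching G A) (hB : IsMatching G B)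
    (hlt : A.ncard < B.ncard) : ∃ t w, IsAugPath G A t w ∧ PathEdges t w ⊆ symmDiff A B := by
  -- Without such a path, the even alternating walks started at the vertices covered by `B` only
  -- inject these into the vertices covered by `A` only, of which there are `2|B| - 2|A|` fewer.
  by_contra hno
  have hend : ∀ v ∈ {v | CoveredBy B v} \ {v | CoveredBy A v}, ∃ n w, IsAltWalk A B n w ∧
      w 0 = v ∧ Even n ∧ w n ∈ {v | CoveredBy A v} \ {v | CoveredBy B v} :=
    fun v hv =>
      ((IsAltWalk.nil (B := B) hv.2).exists_augPath_or_exists_end hA hB hv.1).resolve_left hno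
  choose! n w hw hw0 hn hwn using hend
  have hinj : InjOn (fun v => w v (n v)) ({v | CoveredBy B v} \ {v | CoveredBy A v}) :=
    fun u hu v hv huv => by
      rw [← hw0 u hu, ← hw0 v hv]
      exact (hw u hu).start_eq_of_end_eq hA hB (hw v hv) (hn u hu) (hn v hv) huv
  have hle := ncard_le_ncard_of_injOn _ hwn hinj
  rw [← ncard_le_ncard_iff_ncard_sdiff_le_ncard_sdiff, hB.ncard_setOf_coveredBy,
    hA.ncard_setOf_coveredBy] at hle
  omega

theorem mul_le_ncard_symmDiff [Finite V] {ℓ d : ℕ} (hA : IsMatching G A)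
    (hshort : ∀ k < ℓ, ∀ w : ℕ → V, ¬ IsAugPath G A k w) (hB : IsMatching G B)
    (hd : A.ncard + d ≤ B.ncard) : d * (2 * ℓ + 1) ≤ (symmDiff A B).ncard := by
  induction d generalizing B with
  | zero => simp
  | succ d ih =>
    obtain ⟨t, w, hw, hsub⟩ := exists_augPath_subset_symmDiff hA hB (by omega)
    have hℓt : ℓ ≤ t := not_lt.mp fun ht => hshort t ht w hw
    have hrest : symmDiff A (symmDiff B (PathEdges t w)) = symmDiff A B \ PathEdges t w := by
      rw [← symmDiff_assoc, symmDiff_of_ge hsub]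
    have hind := ih (hw.isMatching_symmDiff_of_subset_symmDiff hB hsub)
      (by have := hw.ncard_symmDiff_of_subset_symmDiff hsub; omega)
    have hpath := ncard_le_ncard hsub
    rw [hrest, ncard_sdiff hsub] at hind
    rw [ncard_pathEdges hw.injOn] at hind hpath
    linarith [(Nat.le_sub_iff_add_le hpath).mp hind]

section DisjointPaths

variable {ℓ m : ℕ} {P : ℕ → ℕ → V}

lemma eq_of_mem_pathEdges_of_mem_pathEdges
    (hdisj : ∀ i < m, ∀ j < m, i ≠ j → ∀ a ≤ 2 * ℓ + 1, ∀ b ≤ 2 * ℓ + 1, P i a ≠ P j b)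
    {i j : ℕ} (hi : i < m) (hj : j < m) {e f : Sym2 V} (he : e ∈ PathEdges ℓ (P i))
    (hf : f ∈ PathEdges ℓ (P j)) {v : V} (hve : v ∈ e) (hvf : v ∈ f) : i = j := by
  by_contra hij
  obtain ⟨a, ha, rfl⟩ := exists_eq_of_mem_pathEdges he hve
  obtain ⟨b, hb, hab⟩ := exists_eq_of_mem_pathEdges hf hvf
  exact hdisj i hi j hj hij a ha b hb hab.symm

variable {k : ℕ} {w : ℕ → V}

lemma IsAugWalk.ne_of_disjoint_setOf_pathEdges (hP : ∀ i < m, IsAugPath G M ℓ (P i))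
    (hM' : IsMatching G (symmDiff M {e | ∃ i < m, e ∈ PathEdges ℓ (P i)}))
    (hw : IsAugWalk G (symmDiff M {e | ∃ i < m, e ∈ PathEdges ℓ (P i)}) k w)
    (hUw : Disjoint {e | ∃ i < m, e ∈ PathEdges ℓ (P i)} (PathEdges k w)) {i a b : ℕ}
    (hi : i < m) (ha : a ≤ 2 * k + 1) (hb : b ≤ 2 * ℓ + 1) : w a ≠ P i b := by
  intro hab
  obtain ⟨e, he, heM, hv⟩ := (hP i hi).1.exists_mem_pathEdges_notMem hb
  rw [← hab] at hv
  exact disjoint_left.mp hUw ⟨i, hi, he⟩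
    (hw.mem_pathEdges_of_mem hM' (Or.inr ⟨⟨i, hi, he⟩, heM⟩) ha hv)

lemma IsAugWalk.of_symmDiff_setOf_pathEdges
    (hw : IsAugWalk G (symmDiff M {e | ∃ i < m, e ∈ PathEdges ℓ (P i)}) k w)
    (hoff : ∀ i < m, ∀ a ≤ 2 * k + 1, ∀ b ≤ 2 * ℓ + 1, w a ≠ P i b) : IsAugWalk G M k w := by
  refine hw.of_agree fun e j hj hv => ?_
  have heU : e ∉ {e | ∃ i < m, e ∈ PathEdges ℓ (P i)} := by
    rintro ⟨i, hi, he⟩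
    obtain ⟨b, hb, hbj⟩ := exists_eq_of_mem_pathEdges he hv
    exact hoff i hi j hj b hb hbj.symm
  rw [Set.mem_symmDiff]
  tauto

lemma isMatching_symmDiff_setOf_pathEdges (hM : IsMatching G M)
    (hP : ∀ i < m, IsAugPath G M ℓ (P i))
    (hdisj : ∀ i < m, ∀ j < m, i ≠ j → ∀ a ≤ 2 * ℓ + 1, ∀ b ≤ 2 * ℓ + 1, P i a ≠ P j b) :
    IsMatching G (symmDiff M {e | ∃ i < m, e ∈ PathEdges ℓ (P i)}) := by
  refine hM.symmDiff ⟨?_, ?_⟩ ?_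
  · rintro _ ⟨⟨i, hi, a, ha, rfl⟩, -⟩
    exact (hP i hi).1.1 a ha
  · rintro e ⟨⟨i, hi, he⟩, heM⟩ f ⟨⟨j, hj, hf⟩, hfM⟩ hef v hve hvf
    obtain rfl := eq_of_mem_pathEdges_of_mem_pathEdges hdisj hi hj he hf hve hvf
    exact (hP i hi).isMatching_pathEdges_sdiff.2 e ⟨he, heM⟩ f ⟨hf, hfM⟩ hef v hve hvf
  · rintro e he f ⟨⟨i, hi, hf⟩, -⟩ v hve hvf
    obtain ⟨a, ha, rfl⟩ := exists_eq_of_mem_pathEdges hf hvf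
    exact ⟨i, hi, (hP i hi).1.mem_pathEdges_of_mem hM he ha hve⟩

lemma ncard_symmDiff_setOf_pathEdges [Finite V] (hP : ∀ i < m, IsAugPath G M ℓ (P i))
    (hdisj : ∀ i < m, ∀ j < m, i ≠ j → ∀ a ≤ 2 * ℓ + 1, ∀ b ≤ 2 * ℓ + 1, P i a ≠ P j b) :
    (symmDiff M {e | ∃ i < m, e ∈ PathEdges ℓ (P i)}).ncard = M.ncard + m ∧
      {e | ∃ i < m, e ∈ PathEdges ℓ (P i)}.ncard = m * (2 * ℓ + 1) := by
  have hpd : (Iio m).PairwiseDisjoint fun i => PathEdges ℓ (P i) := by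
    refine fun i hi j hj hij => disjoint_left.mpr fun e he hf => hij ?_
    obtain ⟨a, -, rfl⟩ := id he
    exact eq_of_mem_pathEdges_of_mem_pathEdges hdisj hi hj he hf (Sym2.mem_mk_left _ _)
      (Sym2.mem_mk_left _ _)
  have hin : ({e | ∃ i < m, e ∈ PathEdges ℓ (P i)} ∩ M).ncard = m * ℓ := by
    rw [show {e | ∃ i < m, e ∈ PathEdges ℓ (P i)} ∩ M = {e | ∃ i < m, e ∈ PathEdges ℓ (P i) ∩ M}
      by ext; simp [← and_assoc, exists_and_right]]
    exact ncard_setOf_exists_lt (hpd.mono fun i => inter_subset_left)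
      fun i hi => (hP i hi).ncard_pathEdges_inter_self
  have hout : ({e | ∃ i < m, e ∈ PathEdges ℓ (P i)} \ M).ncard = m * (ℓ + 1) := by
    rw [show {e | ∃ i < m, e ∈ PathEdges ℓ (P i)} \ M = {e | ∃ i < m, e ∈ PathEdges ℓ (P i) \ M}
      by ext; simp [← and_assoc, exists_and_right]]
    exact ncard_setOf_exists_lt (hpd.mono fun i => sdiff_subset)
      fun i hi => (hP i hi).ncard_pathEdges_sdiff
  have hsd := ncard_symmDiff_add_ncard_inter M {e | ∃ i < m, e ∈ PathEdges ℓ (P i)}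
  have hsplit := ncard_inter_add_ncard_sdiff_eq_ncard {e | ∃ i < m, e ∈ PathEdges ℓ (P i)} M
  constructor <;> linarith

end DisjointPaths

end

/-- key invariant of Hopcroft–Karp: augmenting along a maximal collection of
vertex-disjoint shortest augmenting paths of length `2ℓ+1` (when no shorter augmenting path
exists) yields a matching with no augmenting path of length at most `2ℓ+1`. -/
theorem stmt_11 {V : Type*} [Fintype V] (G : SimpleGraph V) (ℓ : ℕ)
    (M : Set (Sym2 V)) (hM : IsMatching G M)
    (hshort : ∀ k < ℓ, ∀ w : ℕ → V, ¬ IsAugPath G M k w)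
    (m : ℕ) (P : ℕ → ℕ → V)
    (hP : ∀ i < m, IsAugPath G M ℓ (P i))
    (hdisj : ∀ i < m, ∀ j < m, i ≠ j →
      ∀ a ≤ 2 * ℓ + 1, ∀ b ≤ 2 * ℓ + 1, P i a ≠ P j b)
    (hmax : ∀ w : ℕ → V, IsAugPath G M ℓ w →
      ∃ i < m, ∃ a ≤ 2 * ℓ + 1, ∃ b ≤ 2 * ℓ + 1, w a = P i b)
    (M' : Set (Sym2 V))
    (hM'def : M' = symmDiff M {e | ∃ i < m, e ∈ PathEdges ℓ (P i)}) :
    IsMatching G M' ∧ ∀ k ≤ ℓ, ∀ w : ℕ → V, ¬ IsAugPath G M' k w := by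
  obtain ⟨hM'card, hUcard⟩ := ncard_symmDiff_setOf_pathEdges hP hdisj
  have hM' := isMatching_symmDiff_setOf_pathEdges hM hP hdisj
  set U := {e | ∃ i < m, e ∈ PathEdges ℓ (P i)}
  rw [← hM'def] at hM' hM'card
  refine ⟨hM', fun k hk w hw => ?_⟩
  have hkey : (m + 1) * (2 * ℓ + 1) ≤ (symmDiff U (PathEdges k w)).ncard := by
    have := mul_le_ncard_symmDiff (d := m + 1) hM hshort (hw.isMatching_symmDiff hM')
      (by rw [hw.ncard_symmDiff, hM'card]; omega)
    rwa [hM'def, ← symmDiff_assoc, symmDiff_symmDiff_cancel_left] at this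
  have hsd := ncard_symmDiff_add_ncard_inter U (PathEdges k w)
  have hsplit := ncard_inter_add_ncard_sdiff_eq_ncard (PathEdges k w) U
  rw [ncard_pathEdges hw.injOn] at hsplit
  obtain ⟨rfl, hinter⟩ : k = ℓ ∧ (PathEdges k w ∩ U).ncard = 0 := by
    constructor <;> linarith
  have hUw : Disjoint U (PathEdges k w) :=
    (disjoint_iff_inter_eq_empty.mpr ((ncard_eq_zero (toFinite _)).mp hinter)).symm
  rw [hM'def] at hw hM'
  have hoff := fun i (hi : i < m) a (ha : a ≤ 2 * k + 1) b (hb : b ≤ 2 * k + 1) =>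
    hw.1.ne_of_disjoint_setOf_pathEdges hP hM' hUw hi ha hb
  obtain ⟨i, hi, a, ha, b, hb, hab⟩ := hmax w ⟨hw.1.of_symmDiff_setOf_pathEdges hoff, hw.2⟩
  exact hoff i hi a ha b hb hab
end

section
/- Let G be a finite simple bipartite graph, let ℓ ≥ 0 be an integer, and let M be a matching in G with no M-augmenting path of length at most 2ℓ−1. Then every M-augmenting walk of length 2ℓ+1 in G has pairwise distinct vertices; that is, it is an M-augmenting path. -/
lemma aux_parity {V : Type*} (G : SimpleGraph V) (A : Set V)
    (hbip : ∀ ⦃u v : V⦄, G.Adj u v → (u ∈ A ↔ v ∉ A))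
    (n : ℕ) (w : ℕ → V) (hadj : ∀ i < n, G.Adj (w i) (w (i + 1))) :
    ∀ t ≤ n, (w t ∈ A ↔ (t % 2 = 0 ↔ w 0 ∈ A)) := by
  intro t
  induction t with
  | zero => simp
  | succ t ih =>
    intro ht
    have h1 := ih (by omega)
    have h2 := hbip (hadj t (by omega))
    have h3 : (t + 1) % 2 = 0 ↔ ¬ (t % 2 = 0) := by omega
    tauto

lemma aux_main {V : Type*} (G : SimpleGraph V) (A : Set V)
    (hbip : ∀ ⦃u v : V⦄, G.Adj u v → (u ∈ A ↔ v ∉ A))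
    (ℓ : ℕ) (M : Set (Sym2 V))
    (hshort : ∀ k < ℓ, ∀ w : ℕ → V, ¬ IsAugPath G M k w) :
    ∀ k ≤ ℓ, ∀ w : ℕ → V, IsAugWalk G M k w →
      ∀ i ≤ 2 * k + 1, ∀ j ≤ 2 * k + 1, w i = w j → i = j := by
  intro k
  induction k using Nat.strong_induction_on with
  | _ k IH =>
    intro hk w hw i hi j hj hij
    obtain ⟨hadj, h0, hend, hout, hin⟩ := hw
    have key : ∀ p q : ℕ, p < q → q ≤ 2 * k + 1 → w p = w q → False := by
      intro p q hpq hq hwpq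
      -- parity of p and q agree (bipartiteness)
      have hpar := aux_parity G A hbip (2 * k + 1) w hadj
      have h1 := hpar p (by omega)
      have h2 := hpar q hq
      rw [hwpq] at h1
      have hiff : p % 2 = 0 ↔ q % 2 = 0 := by tauto
      have hmod : p % 2 = q % 2 := by omega
      obtain ⟨m, hm⟩ : ∃ m, q = p + 2 * m := by
        refine ⟨(q - p) / 2, ?_⟩; omega
      have hm1 : 1 ≤ m := by omega
      by_cases hp0 : p = 0
      · -- w 0 would be covered by the matching edge ending at position q
        subst hp0
        have hq2k : q ≤ 2 * k := by omega
        refine h0 ⟨_, hin (m - 1) (by omega), ?_⟩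
        have : w 0 = w (2 * (m - 1) + 2) := by
          rw [show 2 * (m - 1) + 2 = q from by omega]; exact hwpq
        rw [this]; exact Sym2.mem_mk_right _ _
      · by_cases hqe : q = 2 * k + 1
        · -- w (2k+1) would be covered by the matching edge starting at position p
          have hpodd : p % 2 = 1 := by omega
          refine hend ⟨_, hin ((p - 1) / 2) (by omega), ?_⟩
          have : w (2 * k + 1) = w (2 * ((p - 1) / 2) + 1) := by
            rw [show 2 * ((p - 1) / 2) + 1 = p from by omega, ← hqe]
            exact hwpq.symm
          rw [this]; exact Sym2.mem_mk_left _ _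
        · -- splice out the cycle, getting a shorter augmenting walk
          have hp1 : 1 ≤ p := by omega
          have hq2k : q ≤ 2 * k := by omega
          have hmk : m < k := by omega
          set w' : ℕ → V := fun t => if t ≤ p then w t else w (t + 2 * m) with hw'
          have hkey2 : ∀ t, t ≤ p → w' t = w t := by
            intro t ht; simp only [hw', if_pos ht]
          have hkey : ∀ t, p ≤ t → w' t = w (t + 2 * m) := by
            intro t ht
            rcases eq_or_lt_of_le ht with h | h
            · subst h
              simp only [hw', if_pos le_rfl]
              rw [hwpq, hm]
            · simp only [hw', if_neg (by omega : ¬ t ≤ p)]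
          have haug' : IsAugWalk G M (k - m) w' := by
            refine ⟨?_, ?_, ?_, ?_, ?_⟩
            · intro t ht
              rcases le_or_gt (t + 1) p with h | h
              · rw [hkey2 t (by omega), hkey2 (t + 1) h]
                exact hadj t (by omega)
              · rw [hkey t (by omega), hkey (t + 1) (by omega),
                  show t + 1 + 2 * m = t + 2 * m + 1 from by omega]
                exact hadj (t + 2 * m) (by omega)
            · rw [hkey2 0 (by omega)]; exact h0
            · rw [hkey (2 * (k - m) + 1) (by omega),
                show 2 * (k - m) + 1 + 2 * m = 2 * k + 1 from by omega]
              exact hend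
            · intro a ha
              rcases le_or_gt (2 * a + 1) p with h | h
              · rw [hkey2 (2 * a) (by omega), hkey2 (2 * a + 1) h]
                exact hout a (by omega)
              · rw [hkey (2 * a) (by omega), hkey (2 * a + 1) (by omega),
                  show 2 * a + 2 * m = 2 * (a + m) from by ring,
                  show 2 * a + 1 + 2 * m = 2 * (a + m) + 1 from by ring]
                exact hout (a + m) (by omega)
            · intro a ha
              rcases le_or_gt (2 * a + 2) p with h | h
              · rw [hkey2 (2 * a + 1) (by omega), hkey2 (2 * a + 2) h]
                exact hin a (by omega)
              · rw [hkey (2 * a + 1) (by omega), hkey (2 * a + 2) (by omega),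
                  show 2 * a + 1 + 2 * m = 2 * (a + m) + 1 from by ring,
                  show 2 * a + 2 + 2 * m = 2 * (a + m) + 2 from by ring]
                exact hin (a + m) (by omega)
          have hinj := IH (k - m) (by omega) (by omega) w' haug'
          exact hshort (k - m) (by omega) w' ⟨haug', hinj⟩
    rcases lt_trichotomy i j with h | h | h
    · exact (key i j h hj hij).elim
    · exact h
    · exact (key j i h hi hij.symm).elim

/-- in a bipartite graph, if a matching has no augmenting path of length at
most `2ℓ−1`, then every augmenting walk of length `2ℓ+1` has pairwise distinct vertices,
i.e., is an augmenting path. -/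
theorem stmt_12 {V : Type*} [Fintype V] (G : SimpleGraph V) (A : Set V)
    (hbip : ∀ ⦃u v : V⦄, G.Adj u v → (u ∈ A ↔ v ∉ A))
    (ℓ : ℕ) (M : Set (Sym2 V)) (hM : IsMatching G M)
    (hshort : ∀ k < ℓ, ∀ w : ℕ → V, ¬ IsAugPath G M k w) :
    ∀ w : ℕ → V, IsAugWalk G M ℓ w →
      ∀ i ≤ 2 * ℓ + 1, ∀ j ≤ 2 * ℓ + 1, w i = w j → i = j :=
  aux_main G A hbip ℓ M hshort ℓ le_rfl
end

section
/- Let n ≥ 1 and ℓ ≥ 1 be natural numbers, and let ℋ be a finite family of functions h : Fin n → Fin ℓ such that for every set S ⊆ Fin n with |S| ≤ ℓ there exists h ∈ ℋ whose restriction to S is injective. Define 𝒵 = { h⁻¹(I) : h ∈ ℋ, I ⊆ Fin ℓ }. Then |𝒵| ≤ |ℋ|·2^ℓ, and for any two disjoint sets A, B ⊆ Fin n with |A| + |B| ≤ ℓ there exists Z ∈ 𝒵 with A ⊆ Z and B ∩ Z = ∅. -/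
/-- the color-coding construction of a separating family of subsets from an
`ℓ`-perfect hash family. -/
theorem stmt_13 (n ℓ : ℕ) (hn : 1 ≤ n) (hℓ : 1 ≤ ℓ)
    (H : Finset (Fin n → Fin ℓ))
    (hH : ∀ S : Finset (Fin n), S.card ≤ ℓ → ∃ h ∈ H, Set.InjOn h ↑S) :
    {Z : Set (Fin n) | ∃ h ∈ H, ∃ I : Set (Fin ℓ), Z = h ⁻¹' I}.ncard ≤ H.card * 2 ^ ℓ ∧
    ∀ A B : Finset (Fin n), Disjoint A B → A.card + B.card ≤ ℓ →
      ∃ Z ∈ {Z : Set (Fin n) | ∃ h ∈ H, ∃ I : Set (Fin ℓ), Z = h ⁻¹' I},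
        ↑A ⊆ Z ∧ ↑B ∩ Z = (∅ : Set (Fin n)) := by
  constructor
  · have hsub : {Z : Set (Fin n) | ∃ h ∈ H, ∃ I : Set (Fin ℓ), Z = h ⁻¹' I} ⊆
        (fun p : (Fin n → Fin ℓ) × Set (Fin ℓ) => p.1 ⁻¹' p.2) '' ((↑H : Set _) ×ˢ Set.univ) := by
      rintro Z ⟨h, hh, I, rfl⟩
      exact ⟨(h, I), ⟨hh, trivial⟩, rfl⟩
    calc {Z : Set (Fin n) | ∃ h ∈ H, ∃ I : Set (Fin ℓ), Z = h ⁻¹' I}.ncard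
        ≤ ((fun p : (Fin n → Fin ℓ) × Set (Fin ℓ) => p.1 ⁻¹' p.2) ''
            ((↑H : Set _) ×ˢ Set.univ)).ncard :=
          Set.ncard_le_ncard hsub (Set.toFinite _)
      _ ≤ ((↑H : Set (Fin n → Fin ℓ)) ×ˢ (Set.univ : Set (Set (Fin ℓ)))).ncard :=
          Set.ncard_image_le (Set.toFinite _)
      _ = H.card * 2 ^ ℓ := by
          rw [Set.ncard_eq_toFinset_card', Set.toFinset_prod, Finset.card_product]
          simp [Fintype.card_set]
  · intro A B hdisj hcard
    obtain ⟨h, hh, hinj⟩ := hH (A ∪ B) (le_trans (Finset.card_union_le A B) hcard)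
    refine ⟨h ⁻¹' (h '' ↑A), ⟨h, hh, _, rfl⟩, fun a ha => ⟨a, ha, rfl⟩, ?_⟩
    ext b
    simp only [Set.mem_inter_iff, Set.mem_preimage, Set.mem_image, Set.mem_empty_iff_false,
      iff_false, not_and]
    rintro hb ⟨a, ha, hab⟩
    have : a = b := hinj (by simp [ha]) (by simp [hb]) hab
    exact (Finset.disjoint_left.mp hdisj (this ▸ ha)) hb
end

section
/- Let G = (V, E) be a finite simple graph, let M be a matching in G, and let ℓ ≥ 0 be an integer. Let 𝒵 be a family of subsets of V such that for any two disjoint sets A, B ⊆ V with |A| + |B| ≤ 2ℓ+2 there exists Z ∈ 𝒵 with A ⊆ Z and B ∩ Z = ∅. For Z ⊆ V, let G_Z denote the spanning subgraph of G whose edges are those uv ∈ E with exactly one of u, v in Z. Let Γ be a collection of pairwise vertex-disjoint M-augmenting paths of length 2ℓ+1 in G such that, for every Z ∈ 𝒵, every M-augmenting path of length 2ℓ+1 in G_Z shares a vertex with some path in Γ. Then every M-augmenting path of length 2ℓ+1 in G shares a vertex with some path in Γ. -/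
/-- The spanning subgraph of `G` whose edges are those of `G` with exactly one endpoint
in `Z`. -/
def CrossSubgraph {V : Type*} (G : SimpleGraph V) (Z : Set V) : SimpleGraph V where
  Adj u v := G.Adj u v ∧ ¬ (u ∈ Z ↔ v ∈ Z)
  symm := by
    constructor
    intro u v h
    exact ⟨h.1.symm, fun hiff => h.2 hiff.symm⟩
  loopless := by
    constructor
    intro v h
    exact G.irrefl h.1

/-! Colour the vertices of an augmenting path `w` of length `2ℓ+1` alternately: the `ℓ+1`
even-indexed vertices and the `ℓ+1` odd-indexed ones are disjoint sets of total size `2ℓ+2`,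
so some `Z ∈ 𝒵` contains the former and misses the latter. Every edge of `w` then has exactly
one endpoint in `Z`, so `w` is an augmenting path of `G_Z` and hence meets a path of the
collection. -/

def IsSeparatingFamily {V : Type*} (𝒵 : Set (Set V)) (r : ℕ) : Prop :=
  ∀ A B : Set V, Disjoint A B → A.ncard + B.ncard ≤ r → ∃ Z ∈ 𝒵, A ⊆ Z ∧ B ∩ Z = (∅ : Set V)

open Set in
theorem IsSeparatingFamily.exists_mem_iff {V : Type*} {𝒵 : Set (Set V)} {n : ℕ}
    (h𝒵 : IsSeparatingFamily 𝒵 (n + 1)) {w : ℕ → V} (hw : InjOn w (Iic n)) (p : ℕ → Prop) :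
    ∃ Z ∈ 𝒵, ∀ i ≤ n, (w i ∈ Z ↔ p i) := by
  set A := w '' {i | i ≤ n ∧ p i}
  set B := w '' {i | i ≤ n ∧ ¬p i}
  have hAB : Disjoint A B := by
    refine Disjoint.image ?_ hw (fun i hi => hi.1) (fun i hi => hi.1)
    exact disjoint_left.mpr fun i hi hi' => hi'.2 hi.2
  have hcard : A.ncard + B.ncard ≤ n + 1 := by
    have hfin : ∀ q : ℕ → Prop, (w '' {i | i ≤ n ∧ q i}).Finite :=
      fun q => ((finite_Iic n).subset fun i hi => hi.1).image w
    rw [← ncard_union_eq hAB (hfin _) (hfin _), ← image_union]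
    calc _ ≤ ({i | i ≤ n ∧ p i} ∪ {i | i ≤ n ∧ ¬p i}).ncard :=
          ncard_image_le ((finite_Iic n).subset (by rintro i (hi | hi) <;> exact hi.1))
      _ = (Iic n).ncard := by congr 1; ext i; simp only [mem_union, mem_ofPred_eq, mem_Iic]; tauto
      _ = n + 1 := by simp
  obtain ⟨Z, hZ, hAZ, hBZ⟩ := h𝒵 A B hAB hcard
  refine ⟨Z, hZ, fun i hi => ⟨fun hiZ => ?_, fun hp => hAZ ⟨i, ⟨hi, hp⟩, rfl⟩⟩⟩
  by_contra hnp
  exact (eq_empty_iff_forall_notMem.mp hBZ) (w i) ⟨⟨i, ⟨hi, hnp⟩, rfl⟩, hiZ⟩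

theorem IsAugWalk.crossSubgraph {V : Type*} {G : SimpleGraph V} {M : Set (Sym2 V)} {k : ℕ}
    {w : ℕ → V} (hw : IsAugWalk G M k w) {Z : Set V} (hZ : ∀ i ≤ 2 * k + 1, (w i ∈ Z ↔ Even i)) :
    IsAugWalk (CrossSubgraph G Z) M k w := by
  obtain ⟨hadj, hstart, hend, hout, hin⟩ := hw
  refine ⟨fun i hi => ⟨hadj i hi, ?_⟩, hstart, hend, hout, hin⟩
  rw [hZ i hi.le, hZ (i + 1) hi, Nat.even_add_one]
  tauto

theorem stmt_14_general {V : Type*} (G : SimpleGraph V)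
    (M : Set (Sym2 V)) (ℓ : ℕ)
    (𝒵 : Set (Set V))
    (hsep : ∀ A B : Set V, Disjoint A B → A.ncard + B.ncard ≤ 2 * ℓ + 2 →
      ∃ Z ∈ 𝒵, A ⊆ Z ∧ B ∩ Z = (∅ : Set V))
    (m : ℕ) (P : ℕ → ℕ → V)
    (hmax : ∀ Z ∈ 𝒵, ∀ w : ℕ → V, IsAugPath (CrossSubgraph G Z) M ℓ w →
      ∃ i < m, ∃ a ≤ 2 * ℓ + 1, ∃ b ≤ 2 * ℓ + 1, w a = P i b) :
    ∀ w : ℕ → V, IsAugPath G M ℓ w →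
      ∃ i < m, ∃ a ≤ 2 * ℓ + 1, ∃ b ≤ 2 * ℓ + 1, w a = P i b := by
  rintro w ⟨hwalk, hinj⟩
  have h𝒵 : IsSeparatingFamily 𝒵 (2 * ℓ + 1 + 1) := hsep
  obtain ⟨Z, hZ, hwZ⟩ := h𝒵.exists_mem_iff (fun i hi j hj => hinj i hi j hj) Even
  exact hmax Z hZ w ⟨hwalk.crossSubgraph hwZ, hinj⟩

/-- a collection of vertex-disjoint length-`(2ℓ+1)` augmenting paths that is
maximal in every bipartite subgraph `G_Z` over a separating family `𝒵` is maximal in `G`. -/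
theorem stmt_14 {V : Type*} [Fintype V] (G : SimpleGraph V)
    (M : Set (Sym2 V)) (hM : IsMatching G M) (ℓ : ℕ)
    (𝒵 : Set (Set V))
    (hsep : ∀ A B : Set V, Disjoint A B → A.ncard + B.ncard ≤ 2 * ℓ + 2 →
      ∃ Z ∈ 𝒵, A ⊆ Z ∧ B ∩ Z = (∅ : Set V))
    (m : ℕ) (P : ℕ → ℕ → V)
    (hP : ∀ i < m, IsAugPath G M ℓ (P i))
    (hdisj : ∀ i < m, ∀ j < m, i ≠ j →
      ∀ a ≤ 2 * ℓ + 1, ∀ b ≤ 2 * ℓ + 1, P i a ≠ P j b)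
    (hmax : ∀ Z ∈ 𝒵, ∀ w : ℕ → V, IsAugPath (CrossSubgraph G Z) M ℓ w →
      ∃ i < m, ∃ a ≤ 2 * ℓ + 1, ∃ b ≤ 2 * ℓ + 1, w a = P i b) :
    ∀ w : ℕ → V, IsAugPath G M ℓ w →
      ∃ i < m, ∃ a ≤ 2 * ℓ + 1, ∃ b ≤ 2 * ℓ + 1, w a = P i b :=
  stmt_14_general G M ℓ 𝒵 hsep m P hmax
end

section
/- Let G = (V, E) be a finite simple graph whose vertex set is partitioned into two disjoint sets R₁ and R₂, and for i ∈ {1,2} let S_i ⊆ R_i be a vertex cover of the induced subgraph G[R_i]. Then: (a) both S₁ ∪ R₂ and S₂ ∪ R₁ are vertex covers of G; (b) min(|S₁ ∪ R₂|, |S₂ ∪ R₁|) ≤ (|S₁| + |S₂| + |V|)/2; and (c) if moreover S* is a vertex cover of G and ε ≥ 0 is such that |S_i| ≤ |S* ∩ R_i| + ε·|V| for i ∈ {1,2}, then min(|S₁ ∪ R₂|, |S₂ ∪ R₁|) ≤ |S*|/2 + |V|/2 + ε·|V|. -/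
/-- combination step of the `(3/2+ε)`-approximation algorithm for MVC of
triangle-free rectangle intersection graphs. -/
theorem stmt_17 {V : Type*} [Fintype V] (G : SimpleGraph V)
    (R1 R2 : Set V) (hd : Disjoint R1 R2) (hu : R1 ∪ R2 = Set.univ)
    (S1 S2 : Set V) (hS1 : IsVCOn G R1 S1) (hS2 : IsVCOn G R2 S2) :
    (IsVC G (S1 ∪ R2) ∧ IsVC G (S2 ∪ R1)) ∧
    (min (((S1 ∪ R2).ncard : ℝ)) (((S2 ∪ R1).ncard : ℝ)) ≤
      ((S1.ncard : ℝ) + (S2.ncard : ℝ) + (Fintype.card V : ℝ)) / 2) ∧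
    (∀ Sstar : Set V, IsVC G Sstar → ∀ ε : ℝ, 0 ≤ ε →
      (S1.ncard : ℝ) ≤ ((Sstar ∩ R1).ncard : ℝ) + ε * (Fintype.card V : ℝ) →
      (S2.ncard : ℝ) ≤ ((Sstar ∩ R2).ncard : ℝ) + ε * (Fintype.card V : ℝ) →
      min (((S1 ∪ R2).ncard : ℝ)) (((S2 ∪ R1).ncard : ℝ)) ≤
        (Sstar.ncard : ℝ) / 2 + (Fintype.card V : ℝ) / 2 + ε * (Fintype.card V : ℝ)) := by

  classical
  have hmem : ∀ v : V, v ∈ R1 ∨ v ∈ R2 := by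
    intro v
    have : v ∈ R1 ∪ R2 := by rw [hu]; trivial
    exact this
  have hvc1 : IsVC G (S1 ∪ R2) := by
    intro u v huv
    rcases hmem u with hu1 | hu2
    · rcases hmem v with hv1 | hv2
      · rcases hS1.2 huv hu1 hv1 with h | h
        · exact Or.inl (Or.inl h)
        · exact Or.inr (Or.inl h)
      · exact Or.inr (Or.inr hv2)
    · exact Or.inl (Or.inr hu2)
  have hvc2 : IsVC G (S2 ∪ R1) := by
    intro u v huv
    rcases hmem u with hu1 | hu2
    · exact Or.inl (Or.inr hu1)
    · rcases hmem v with hv1 | hv2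
      · exact Or.inr (Or.inr hv1)
      · rcases hS2.2 huv hu2 hv2 with h | h
        · exact Or.inl (Or.inl h)
        · exact Or.inr (Or.inl h)
  have hcardsum : (R1.ncard : ℝ) + (R2.ncard : ℝ) = (Fintype.card V : ℝ) := by
    have := Set.ncard_union_eq hd (Set.toFinite _) (Set.toFinite _)
    rw [hu, Set.ncard_univ, Nat.card_eq_fintype_card] at this
    exact_mod_cast this.symm
  have h1 : ((S1 ∪ R2).ncard : ℝ) ≤ (S1.ncard : ℝ) + (R2.ncard : ℝ) := by
    exact_mod_cast Set.ncard_union_le S1 R2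
  have h2 : ((S2 ∪ R1).ncard : ℝ) ≤ (S2.ncard : ℝ) + (R1.ncard : ℝ) := by
    exact_mod_cast Set.ncard_union_le S2 R1
  have hmin : min (((S1 ∪ R2).ncard : ℝ)) (((S2 ∪ R1).ncard : ℝ)) ≤
      ((S1.ncard : ℝ) + (S2.ncard : ℝ) + (Fintype.card V : ℝ)) / 2 := by
    have hle : min (((S1 ∪ R2).ncard : ℝ)) (((S2 ∪ R1).ncard : ℝ)) ≤
        (((S1 ∪ R2).ncard : ℝ) + ((S2 ∪ R1).ncard : ℝ)) / 2 := by
      rcases le_total (((S1 ∪ R2).ncard : ℝ)) (((S2 ∪ R1).ncard : ℝ)) with h | h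
      · rw [min_eq_left h]; linarith
      · rw [min_eq_right h]; linarith
    calc min (((S1 ∪ R2).ncard : ℝ)) (((S2 ∪ R1).ncard : ℝ))
        ≤ (((S1 ∪ R2).ncard : ℝ) + ((S2 ∪ R1).ncard : ℝ)) / 2 := hle
      _ ≤ ((S1.ncard : ℝ) + (S2.ncard : ℝ) + (Fintype.card V : ℝ)) / 2 := by linarith
  refine ⟨⟨hvc1, hvc2⟩, hmin, ?_⟩
  intro Sstar _ ε hε hb1 hb2
  have hdisj : Disjoint (Sstar ∩ R1) (Sstar ∩ R2) :=
    Disjoint.mono Set.inter_subset_right Set.inter_subset_right hd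
  have hsub : ((Sstar ∩ R1).ncard : ℝ) + ((Sstar ∩ R2).ncard : ℝ) ≤ (Sstar.ncard : ℝ) := by
    have h := Set.ncard_union_le (Sstar ∩ R1) (Sstar ∩ R2)
    have heq := Set.ncard_union_eq hdisj (Set.toFinite _) (Set.toFinite _)
    have hsubset : (Sstar ∩ R1) ∪ (Sstar ∩ R2) ⊆ Sstar := by
      intro x hx; rcases hx with h | h <;> exact h.1
    have := Set.ncard_le_ncard hsubset (Set.toFinite _)
    rw [heq] at this
    exact_mod_cast this
  linarith
end

section
/- Consider ℝ^d (d ≥ 1) equipped with the supremum (ℓ∞) metric, and let P be a finite set of points in ℝ^d, ρ > 0 a real, and k ≥ 1 a natural number. If every closed ball of radius ρ contains fewer than k points of P, then every closed ball of radius 2ρ contains at most 2^d·(k−1) points of P. -/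
/-- doubling bound on point counts in `ℝ^d` with the supremum metric
(the metric on `Fin d → ℝ` is the sup metric, so closed balls are axis-aligned hypercubes):
if every closed ball of radius `ρ` contains fewer than `k` points of `P`, then every closed
ball of radius `2ρ` contains at most `2^d·(k−1)` points of `P`. -/
theorem stmt_18 (d : ℕ) (hd : 1 ≤ d) (P : Finset (Fin d → ℝ)) (ρ : ℝ) (hρ : 0 < ρ)
    (k : ℕ) (hk : 1 ≤ k)
    (h : ∀ c : Fin d → ℝ, ((↑P : Set (Fin d → ℝ)) ∩ Metric.closedBall c ρ).ncard < k) :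
    ∀ c : Fin d → ℝ,
      ((↑P : Set (Fin d → ℝ)) ∩ Metric.closedBall c (2 * ρ)).ncard ≤ 2 ^ d * (k - 1) := by
  intro c
  classical
  -- centers of the 2^d subcubes
  set ctr : (Fin d → Bool) → (Fin d → ℝ) :=
    fun s i => c i + (if s i then ρ else -ρ) with hctr
  have hfilt : ∀ c' r, ((↑P : Set (Fin d → ℝ)) ∩ Metric.closedBall c' r) =
      ↑(P.filter (fun x => x ∈ Metric.closedBall c' r)) := by
    intro c' r
    ext x; simp [Set.mem_inter_iff, and_comm]
  rw [hfilt, Set.ncard_coe_finset]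
  have hsub : P.filter (fun x => x ∈ Metric.closedBall c (2 * ρ)) ⊆
      (Finset.univ : Finset (Fin d → Bool)).biUnion
        (fun s => P.filter (fun x => x ∈ Metric.closedBall (ctr s) ρ)) := by
    intro x hx
    simp only [Finset.mem_filter, Metric.mem_closedBall] at hx
    obtain ⟨hxP, hxd⟩ := hx
    refine Finset.mem_biUnion.2 ⟨fun i => decide (c i ≤ x i), Finset.mem_univ _, ?_⟩
    simp only [Finset.mem_filter, Metric.mem_closedBall]
    refine ⟨hxP, ?_⟩
    rw [dist_pi_le_iff (by linarith : (0:ℝ) ≤ 2*ρ)] at hxd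
    rw [dist_pi_le_iff hρ.le]
    intro i
    have hi := hxd i
    rw [Real.dist_eq] at hi ⊢
    rw [abs_le] at hi ⊢
    by_cases hci : c i ≤ x i <;> simp [hctr, hci] <;> first | (constructor <;> linarith) | linarith
  calc (P.filter (fun x => x ∈ Metric.closedBall c (2 * ρ))).card
      ≤ ((Finset.univ : Finset (Fin d → Bool)).biUnion
        (fun s => P.filter (fun x => x ∈ Metric.closedBall (ctr s) ρ))).card :=
        Finset.card_le_card hsub
    _ ≤ ∑ s : Fin d → Bool, (P.filter (fun x => x ∈ Metric.closedBall (ctr s) ρ)).card :=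
        Finset.card_biUnion_le
    _ ≤ ∑ _s : Fin d → Bool, (k - 1) := by
        apply Finset.sum_le_sum
        intro s _
        have := h (ctr s)
        rw [hfilt, Set.ncard_coe_finset] at this
        omega
    _ = 2 ^ d * (k - 1) := by
        simp [Finset.sum_const, Finset.card_univ]
end

section
/- For every real β with 0 < β < 1 there exists a constant K > 0 (depending only on β) with the following property: for all reals b ≥ 1 and C ≥ 0, and every function E : ℕ → ℝ such that E(n) ≥ 0 for all n, E(n) = 0 for all n < b, and for every n ≥ b there exist natural numbers n₁, n₂ with n₁ + n₂ ≤ n, n₁ ≤ (1−β)·n, n₂ ≤ (1−β)·n, and E(n) ≤ E(n₁) + E(n₂) + C·√n, it holds that E(n) ≤ K·C·n/√b for every natural number n. -/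
private lemma sqrt_le_div_aux (b n : ℝ) (hb : 1 ≤ b) (hn : b ≤ n) :
    Real.sqrt n ≤ n / Real.sqrt b := by
  have hb0 : (0:ℝ) < Real.sqrt b := Real.sqrt_pos.mpr (by linarith)
  rw [le_div_iff₀ hb0]
  calc Real.sqrt n * Real.sqrt b ≤ Real.sqrt n * Real.sqrt n :=
        mul_le_mul_of_nonneg_left (Real.sqrt_le_sqrt hn) (Real.sqrt_nonneg n)
    _ = n := Real.mul_self_sqrt (by linarith)

private lemma one_big_aux (β B A b n m : ℝ) (hB : 0 < B) (hA : 0 < A)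
    (hAβ : A * β = 2*(1+B)) (hb : 1 ≤ b) (hn : b ≤ n) (hm0 : 0 ≤ m)
    (hm : m ≤ (1-β)*n) :
    A * m / Real.sqrt b - B * Real.sqrt m + Real.sqrt n ≤
      A * n / Real.sqrt b - B * Real.sqrt n := by
  have hn0 : (0:ℝ) < n := by linarith
  have hsb : 0 < Real.sqrt b := Real.sqrt_pos.mpr (by linarith)
  have hsd : Real.sqrt n ≤ n / Real.sqrt b := sqrt_le_div_aux b n hb hn
  have hsnn : (0:ℝ) ≤ Real.sqrt n := Real.sqrt_nonneg _
  have hmnn : (0:ℝ) ≤ Real.sqrt m := Real.sqrt_nonneg _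
  have hnum : A * m ≤ A * n - 2*(1+B)*n := by
    nlinarith [mul_le_mul_of_nonneg_left hm hA.le,
      mul_le_mul_of_nonneg_right (le_of_eq hAβ) hn0.le,
      mul_le_mul_of_nonneg_right (ge_of_eq hAβ) hn0.le]
  have f1 : A * m / Real.sqrt b ≤ (A * n - 2*(1+B)*n) / Real.sqrt b := by gcongr
  have f2 : (A * n - 2*(1+B)*n) / Real.sqrt b
      = A * n / Real.sqrt b - 2*(1+B)*(n/Real.sqrt b) := by ring
  have f3 : 2*(1+B)*Real.sqrt n ≤ 2*(1+B)*(n/Real.sqrt b) :=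
    mul_le_mul_of_nonneg_left hsd (by linarith)
  have f4 : 0 ≤ B * Real.sqrt m := by positivity
  have f5 : 0 ≤ B * Real.sqrt n := by positivity
  linarith

private lemma big_big_aux (β s B A b n x y : ℝ) (hβ0 : 0 < β) (hβ1 : β < 1)
    (hs : s = Real.sqrt (1 + β/2)) (hBs : B * s = 1 + B) (hB : 0 < B)
    (hAβ : A * β = 2*(1+B)) (hA : 0 < A) (hb : 1 ≤ b) (hn : b ≤ n)
    (hx0 : 0 ≤ x) (hy0 : 0 ≤ y) (hxy : x + y ≤ n)
    (hx : x ≤ (1-β)*n) (hy : y ≤ (1-β)*n) :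
    (1+B) * Real.sqrt n ≤
      B * (Real.sqrt x + Real.sqrt y) + A * (n - x - y) / Real.sqrt b := by
  have hn0 : (0:ℝ) < n := by linarith
  have hsb : 0 < Real.sqrt b := Real.sqrt_pos.mpr (by linarith)
  have hsd : Real.sqrt n ≤ n / Real.sqrt b := sqrt_le_div_aux b n hb hn
  have hsnn : (0:ℝ) ≤ Real.sqrt n := Real.sqrt_nonneg _
  rcases le_or_gt (β * n / 2) (n - x - y) with ht | ht
  · have e1 : (1+B)*n ≤ A * (n - x - y) := by
      nlinarith [mul_le_mul_of_nonneg_left ht hA.le,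
        mul_le_mul_of_nonneg_right (le_of_eq hAβ) hn0.le,
        mul_le_mul_of_nonneg_right (ge_of_eq hAβ) hn0.le]
    have e2 : (1+B)*n / Real.sqrt b ≤ A * (n - x - y) / Real.sqrt b := by gcongr
    have e3 : (1+B) * Real.sqrt n ≤ (1+B) * (n/Real.sqrt b) :=
      mul_le_mul_of_nonneg_left hsd (by linarith)
    have e4 : 0 ≤ B * (Real.sqrt x + Real.sqrt y) := by positivity
    have e5 : (1+B)*n/Real.sqrt b = (1+B)*(n/Real.sqrt b) := by ring
    linarith
  · have h1' : β * n / 2 ≤ x := by linarith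
    have h2' : β * n / 2 ≤ y := by linarith
    have hq1 : Real.sqrt (β*n/2) ≤ Real.sqrt x := Real.sqrt_le_sqrt h1'
    have hq2 : Real.sqrt (β*n/2) ≤ Real.sqrt y := Real.sqrt_le_sqrt h2'
    have hq0 : (0:ℝ) ≤ Real.sqrt (β*n/2) := Real.sqrt_nonneg _
    have hqq : Real.sqrt (β*n/2) * Real.sqrt (β*n/2) = β*n/2 :=
      Real.mul_self_sqrt (by positivity)
    have hprod : β*n/2 ≤ Real.sqrt x * Real.sqrt y := by
      nlinarith [mul_le_mul hq1 hq2 hq0 (Real.sqrt_nonneg x)]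
    have hx1 : Real.sqrt x ^ 2 = x := Real.sq_sqrt hx0
    have hy1 : Real.sqrt y ^ 2 = y := Real.sq_sqrt hy0
    have hsumsq : (1+β/2)*n ≤ (Real.sqrt x + Real.sqrt y)^2 := by nlinarith
    have hss : s * Real.sqrt n ≤ Real.sqrt x + Real.sqrt y := by
      have e1 : s * Real.sqrt n = Real.sqrt ((1+β/2)*n) := by
        rw [hs, ← Real.sqrt_mul (by positivity)]
      rw [e1]
      calc Real.sqrt ((1+β/2)*n)
          ≤ Real.sqrt ((Real.sqrt x + Real.sqrt y)^2) := Real.sqrt_le_sqrt hsumsq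
        _ = Real.sqrt x + Real.sqrt y :=
            Real.sqrt_sq (add_nonneg (Real.sqrt_nonneg x) (Real.sqrt_nonneg y))
    have e6 : (1+B) * Real.sqrt n ≤ B * (Real.sqrt x + Real.sqrt y) := by
      calc (1+B) * Real.sqrt n = B * (s * Real.sqrt n) := by rw [← hBs]; ring
        _ ≤ _ := mul_le_mul_of_nonneg_left hss hB.le
    have e7 : 0 ≤ A * (n - x - y) / Real.sqrt b :=
      div_nonneg (mul_nonneg hA.le (by linarith)) (Real.sqrt_nonneg b)
    linarith

/-- solution of the divide-and-conquer additive-error recurrence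
`E(n) ≤ E(n₁) + E(n₂) + C·√n` with balanced splits and base case below `b`. -/
theorem stmt_19 (β : ℝ) (hβ0 : 0 < β) (hβ1 : β < 1) :
    ∃ K : ℝ, 0 < K ∧
      ∀ b C : ℝ, 1 ≤ b → 0 ≤ C →
        ∀ E : ℕ → ℝ,
          (∀ n : ℕ, 0 ≤ E n) →
          (∀ n : ℕ, (n : ℝ) < b → E n = 0) →
          (∀ n : ℕ, b ≤ (n : ℝ) →
            ∃ n₁ n₂ : ℕ, n₁ + n₂ ≤ n ∧ (n₁ : ℝ) ≤ (1 - β) * n ∧ (n₂ : ℝ) ≤ (1 - β) * n ∧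
              E n ≤ E n₁ + E n₂ + C * Real.sqrt n) →
          ∀ n : ℕ, E n ≤ K * C * n / Real.sqrt b := by
  set s : ℝ := Real.sqrt (1 + β/2) with hs_def
  have hs1 : 1 < s := by
    rw [hs_def]
    exact (Real.lt_sqrt (by norm_num)).mpr (by nlinarith)
  set B : ℝ := 1/(s-1) with hB_def
  have hB : 0 < B := by rw [hB_def]; exact one_div_pos.mpr (by linarith)
  have hBs : B * s = 1 + B := by
    have hne : s - 1 ≠ 0 := ne_of_gt (by linarith)
    have h : B * (s - 1) = 1 := by rw [hB_def]; field_simp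
    linarith [h]
  set A : ℝ := 2*(1+B)/β with hA_def
  have hA : 0 < A := by rw [hA_def]; positivity
  have hAβ : A * β = 2*(1+B) := by
    rw [hA_def]; field_simp
  have hA1 : 1 + B ≤ A := by
    nlinarith [mul_nonneg hA.le (by linarith : (0:ℝ) ≤ 1 - β)]
  refine ⟨A, hA, ?_⟩
  intro b C hb hC E hE0 hEbase hrec
  have hsb : 0 < Real.sqrt b := Real.sqrt_pos.mpr (by linarith)
  have key : ∀ n : ℕ, b ≤ (n:ℝ) →
      E n ≤ C * (A * n / Real.sqrt b - B * Real.sqrt n) := by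
    intro n
    induction n using Nat.strong_induction_on with
    | _ n IH =>
      intro hn
      obtain ⟨n₁, n₂, hsum, h1, h2, hEn⟩ := hrec n hn
      have hn0 : (0:ℝ) < n := by linarith
      have hsd : Real.sqrt (n:ℝ) ≤ (n:ℝ) / Real.sqrt b := sqrt_le_div_aux b n hb hn
      have hsnn : (0:ℝ) ≤ Real.sqrt (n:ℝ) := Real.sqrt_nonneg _
      have hsumR : (n₁:ℝ) + (n₂:ℝ) ≤ (n:ℝ) := by exact_mod_cast hsum
      have child : ∀ m : ℕ, (m:ℝ) ≤ (1-β)*(n:ℝ) →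
          (E m = 0 ∧ (m:ℝ) < b) ∨
          (b ≤ (m:ℝ) ∧ E m ≤ C * (A * m / Real.sqrt b - B * Real.sqrt m)) := by
        intro m hm
        rcases lt_or_ge ((m:ℝ)) b with h | h
        · exact Or.inl ⟨hEbase m h, h⟩
        · refine Or.inr ⟨h, IH m ?_ h⟩
          have : (m:ℝ) < n := by nlinarith
          exact_mod_cast this
      have one_big : ∀ m : ℕ, (m:ℝ) ≤ (1-β)*(n:ℝ) →
          A * m / Real.sqrt b - B * Real.sqrt m + Real.sqrt (n:ℝ) ≤
            A * n / Real.sqrt b - B * Real.sqrt n := fun m hm =>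
        one_big_aux β B A b n m hB hA hAβ hb hn (Nat.cast_nonneg m) hm
      rcases child n₁ h1 with ⟨hz1, _⟩ | ⟨hb1, hc1⟩ <;>
        rcases child n₂ h2 with ⟨hz2, _⟩ | ⟨hb2, hc2⟩
      · -- both children below the threshold
        have e1 : A * Real.sqrt (n:ℝ) ≤ A * ((n:ℝ) / Real.sqrt b) :=
          mul_le_mul_of_nonneg_left hsd hA.le
        have e2 : (1+B) * Real.sqrt (n:ℝ) ≤ A * Real.sqrt (n:ℝ) :=
          mul_le_mul_of_nonneg_right hA1 hsnn
        have harith : Real.sqrt (n:ℝ) ≤ A * n / Real.sqrt b - B * Real.sqrt n := by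
          have e3 : A * ((n:ℝ)/Real.sqrt b) = A * (n:ℝ) / Real.sqrt b := by ring
          have e4 : 0 ≤ B * Real.sqrt (n:ℝ) := by positivity
          linarith
        calc E n ≤ E n₁ + E n₂ + C * Real.sqrt n := hEn
          _ = C * Real.sqrt (n:ℝ) := by rw [hz1, hz2]; ring
          _ ≤ _ := mul_le_mul_of_nonneg_left harith hC
      · -- n₁ small, n₂ big
        calc E n ≤ E n₁ + E n₂ + C * Real.sqrt n := hEn
          _ ≤ 0 + C * (A * n₂ / Real.sqrt b - B * Real.sqrt n₂) + C * Real.sqrt n := by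
              rw [hz1]; linarith
          _ = C * (A * n₂ / Real.sqrt b - B * Real.sqrt n₂ + Real.sqrt (n:ℝ)) := by ring
          _ ≤ _ := mul_le_mul_of_nonneg_left (one_big n₂ h2) hC
      · -- n₂ small, n₁ big
        calc E n ≤ E n₁ + E n₂ + C * Real.sqrt n := hEn
          _ ≤ C * (A * n₁ / Real.sqrt b - B * Real.sqrt n₁) + 0 + C * Real.sqrt n := by
              rw [hz2]; linarith
          _ = C * (A * n₁ / Real.sqrt b - B * Real.sqrt n₁ + Real.sqrt (n:ℝ)) := by ring
          _ ≤ _ := mul_le_mul_of_nonneg_left (one_big n₁ h1) hC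
      · -- both children big
        have hkey : (1+B) * Real.sqrt (n:ℝ) ≤
            B * (Real.sqrt (n₁:ℝ) + Real.sqrt (n₂:ℝ)) +
              A * ((n:ℝ) - n₁ - n₂) / Real.sqrt b :=
          big_big_aux β s B A b n n₁ n₂ hβ0 hβ1 hs_def hBs hB hAβ hA hb hn
            (Nat.cast_nonneg n₁) (Nat.cast_nonneg n₂) hsumR h1 h2
        have ering : A * (n:ℝ) / Real.sqrt b =
            A * (n₁:ℝ) / Real.sqrt b + A * (n₂:ℝ) / Real.sqrt b +
              A * ((n:ℝ) - n₁ - n₂) / Real.sqrt b := by ring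
        have harith : A * (n₁:ℝ) / Real.sqrt b - B * Real.sqrt (n₁:ℝ) +
            (A * (n₂:ℝ) / Real.sqrt b - B * Real.sqrt (n₂:ℝ)) + Real.sqrt (n:ℝ) ≤
            A * (n:ℝ) / Real.sqrt b - B * Real.sqrt (n:ℝ) := by
          linarith
        calc E n ≤ E n₁ + E n₂ + C * Real.sqrt n := hEn
          _ ≤ C * (A * n₁ / Real.sqrt b - B * Real.sqrt n₁) +
                C * (A * n₂ / Real.sqrt b - B * Real.sqrt n₂) + C * Real.sqrt n := by
              linarith
          _ = C * (A * (n₁:ℝ) / Real.sqrt b - B * Real.sqrt (n₁:ℝ) +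
                (A * (n₂:ℝ) / Real.sqrt b - B * Real.sqrt (n₂:ℝ)) + Real.sqrt (n:ℝ)) := by
              ring
          _ ≤ _ := mul_le_mul_of_nonneg_left harith hC
  intro n
  rcases lt_or_ge ((n:ℝ)) b with h | h
  · rw [hEbase n h]
    positivity
  · calc E n ≤ C * (A * n / Real.sqrt b - B * Real.sqrt n) := key n h
      _ ≤ A * C * n / Real.sqrt b := by
        have h1 : (0:ℝ) ≤ C * (B * Real.sqrt n) := by positivity
        have h2 : C * (A * n / Real.sqrt b - B * Real.sqrt n)
            = A * C * n / Real.sqrt b - C * (B * Real.sqrt n) := by ring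
        linarith
end
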